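/- arXiv:2111.08886 — 7 statements merged into one kernel-verified Lean document; each statement's English description precedes it below -/
import Mathlib

section
/- Let q be a power of an odd prime and let P, Q ∈ F_q[x] be non-constant polynomials of degree at most 2 such that for every k ∈ F_q the polynomial P − kQ is not constant. Then the set (P,Q) = {(P(x), Q(x)) : x ∈ F_q} is a maximum Sidon set over F_q × F_q (i.e., a Sidon set with exactly q elements). In particular, {(x, x²) : x ∈ F_q} is a maximum Sidon set. -/
open Polynomial

/-- A subset `A` of an abelian group is a Sidon set if whenever
`a₁ - a₂ = a₃ - a₄` with all four elements in `A`, then `{a₁, a₄} = {a₂, a₃}`. -/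
def IsSidon {G : Type*} [AddCommGroup G] (A : Set G) : Prop :=
  ∀ a₁ ∈ A, ∀ a₂ ∈ A, ∀ a₃ ∈ A, ∀ a₄ ∈ A,
    a₁ - a₂ = a₃ - a₄ → ({a₁, a₄} : Set G) = {a₂, a₃}

/-- The set `(P,Q) = {(P(x), Q(x)) : x ∈ F}`. -/
def polyGraph {F : Type*} [Field F] (P Q : F[X]) : Set (F × F) :=
  Set.range fun x : F => (P.eval x, Q.eval x)

/-- A maximum Sidon set over `F × F`: a Sidon set with exactly `|F|` elements. -/
def IsMaxSidon {F : Type*} [Field F] [Fintype F] (A : Set (F × F)) : Prop :=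
  IsSidon A ∧ A.ncard = Fintype.card F

/-- A polynomial `P` is Sidon if there is `Q` with `(P,Q)` a maximum Sidon set. -/
def IsSidonPoly {F : Type*} [Field F] [Fintype F] (P : F[X]) : Prop :=
  ∃ Q : F[X], IsMaxSidon (polyGraph P Q)

/-- A permutation polynomial: its evaluation map is a bijection of `F`. -/
def IsPermPoly {F : Type*} [Field F] (R : F[X]) : Prop :=
  Function.Bijective fun x : F => R.eval x

/-- Sidon equivalence: `P' = R ∘ P ∘ T` (as functions on `F`)
for permutation polynomials `R`, `T`. -/
def SidonEquiv {F : Type*} [Field F] (P P' : F[X]) : Prop :=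
  ∃ R T : F[X], IsPermPoly R ∧ IsPermPoly T ∧
    ∀ x : F, P'.eval x = R.eval (P.eval (T.eval x))

/-!
For `P`, `Q` of degree at most 2, `(P,Q)` is the image of `{(x, x²)}` under an affine map of
`F × F` whose linear part has matrix `[[P₁, P₂], [Q₁, Q₂]]` (coefficients of `x` and `x²`); the
hypothesis that every `P - kQ` is nonconstant says exactly that its determinant is nonzero. Injective affine maps
preserve maximum Sidon sets, and `{(x, x²)}` is one because, when `2 ≠ 0`, the sum `x + w` and
the sum of squares `x² + w²` determine the pair `{x, w}`.
-/

namespace IsSidon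

variable {G H : Type*} [AddCommGroup G] [AddCommGroup H]

theorem image_add_injective {A : Set G} (hA : IsSidon A) (f : G →+ H)
    (hf : Function.Injective f) (c : H) : IsSidon ((fun a => f a + c) '' A) := by
  rintro _ ⟨a₁, h₁, rfl⟩ _ ⟨a₂, h₂, rfl⟩ _ ⟨a₃, h₃, rfl⟩ _ ⟨a₄, h₄, rfl⟩ heq
  rw [add_sub_add_right_eq_sub, add_sub_add_right_eq_sub, ← map_sub, ← map_sub] at heq
  have hpair := congrArg ((fun a => f a + c) '' ·) (hA a₁ h₁ a₂ h₂ a₃ h₃ a₄ h₄ (hf heq))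
  simpa only [Set.image_pair] using hpair

end IsSidon

theorem pair_eq_of_add_eq_of_sq_add_sq_eq {R : Type*} [CommRing R] [IsDomain R] (h2 : (2 : R) ≠ 0)
    {x y z w : R}
    (hsum : x + w = y + z) (hsq : x ^ 2 + w ^ 2 = y ^ 2 + z ^ 2) :
    ({x, w} : Set R) = {y, z} := by
  have hprod : x * w = y * z :=
    mul_left_cancel₀ h2 (by linear_combination (x + w + y + z) * hsum - hsq)
  have hroots : (x - y) * (x - z) = 0 := by linear_combination x * hsum - hprod
  rcases mul_eq_zero.mp hroots with hxy | hxz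
  · obtain rfl := sub_eq_zero.mp hxy
    obtain rfl : w = z := by linear_combination hsum
    rfl
  · obtain rfl := sub_eq_zero.mp hxz
    obtain rfl : w = y := by linear_combination hsum
    exact Set.pair_comm _ _

section MaxSidon

variable {F : Type*} [Field F] [Fintype F]

theorem IsMaxSidon.image_add_injective {A : Set (F × F)} (hA : IsMaxSidon A)
    (f : F × F →+ F × F) (hf : Function.Injective f) (c : F × F) :
    IsMaxSidon ((fun a => f a + c) '' A) :=
  ⟨hA.1.image_add_injective f hf c,
    (Set.ncard_image_of_injective A ((add_left_injective c).comp hf)).trans hA.2⟩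

theorem isMaxSidon_range_sq (h2 : (2 : F) ≠ 0) :
    IsMaxSidon (Set.range fun x : F => (x, x ^ 2)) := by
  constructor
  · rintro _ ⟨x, rfl⟩ _ ⟨y, rfl⟩ _ ⟨z, rfl⟩ _ ⟨w, rfl⟩ heq
    simp only [Prod.mk_sub_mk, Prod.mk.injEq] at heq
    have hpair := congrArg ((fun x : F => (x, x ^ 2)) '' ·)
      (pair_eq_of_add_eq_of_sq_add_sq_eq (x := x) (y := y) (z := z) (w := w) h2
        (by linear_combination heq.1) (by linear_combination heq.2))
    simpa only [Set.image_pair] using hpair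
  · rw [← Set.image_univ, Set.ncard_image_of_injective _ fun x y hxy => congrArg Prod.fst hxy,
      Set.ncard_univ, Nat.card_eq_fintype_card]

end MaxSidon

namespace Polynomial

variable {F : Type*} [Field F]

theorem eval_eq_of_natDegree_le_two {P : F[X]} (hP : P.natDegree ≤ 2) (x : F) :
    P.eval x = P.coeff 0 + P.coeff 1 * x + P.coeff 2 * x ^ 2 := by
  rw [eval_eq_sum_range' (show P.natDegree < 3 by omega) x]
  simp [Finset.sum_range_succ]

theorem coeff_one_ne_zero_or_coeff_two_ne_zero {P : F[X]} (h0 : 0 < P.natDegree)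
    (h2 : P.natDegree ≤ 2) : P.coeff 1 ≠ 0 ∨ P.coeff 2 ≠ 0 := by
  have hlead : P.coeff P.natDegree ≠ 0 :=
    leadingCoeff_ne_zero.mpr (ne_zero_of_natDegree_gt h0)
  interval_cases P.natDegree
  · exact Or.inl hlead
  · exact Or.inr hlead

def quadraticLinearPart (P Q : F[X]) : F × F →+ F × F :=
  AddMonoidHom.mk' (fun u => (P.coeff 1 * u.1 + P.coeff 2 * u.2, Q.coeff 1 * u.1 + Q.coeff 2 * u.2))
    fun u v => by ext <;> simp only [Prod.fst_add, Prod.snd_add] <;> ring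

theorem polyGraph_eq_image {P Q : F[X]} (hP : P.natDegree ≤ 2) (hQ : Q.natDegree ≤ 2) :
    polyGraph P Q = (fun u => quadraticLinearPart P Q u + (P.coeff 0, Q.coeff 0)) ''
      Set.range fun x : F => (x, x ^ 2) := by
  rw [polyGraph, ← Set.range_comp]
  congr 1
  funext x
  simp only [Function.comp_apply, quadraticLinearPart, AddMonoidHom.mk'_apply,
    eval_eq_of_natDegree_le_two hP, eval_eq_of_natDegree_le_two hQ, Prod.mk_add_mk]
  ext <;> ring

theorem quadraticLinearPart_injective {P Q : F[X]}
    (hdet : P.coeff 2 * Q.coeff 1 - Q.coeff 2 * P.coeff 1 ≠ 0) :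
    Function.Injective (quadraticLinearPart P Q) := by
  refine (injective_iff_map_eq_zero _).mpr fun u hu => ?_
  simp only [quadraticLinearPart, AddMonoidHom.mk'_apply, Prod.mk_eq_zero] at hu
  obtain ⟨h₁, h₂⟩ := hu
  ext
  · exact (mul_eq_zero.mp (by linear_combination P.coeff 2 * h₂ - Q.coeff 2 * h₁ :
      (P.coeff 2 * Q.coeff 1 - Q.coeff 2 * P.coeff 1) * u.1 = 0)).resolve_left hdet
  · exact (mul_eq_zero.mp (by linear_combination Q.coeff 1 * h₁ - P.coeff 1 * h₂ :
      (P.coeff 2 * Q.coeff 1 - Q.coeff 2 * P.coeff 1) * u.2 = 0)).resolve_left hdet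

theorem coeff_det_ne_zero {P Q : F[X]} (hQ : 0 < Q.natDegree) (hPdeg : P.natDegree ≤ 2)
    (hQdeg : Q.natDegree ≤ 2) (h : ∀ k : F, 0 < (P - C k * Q).natDegree) :
    P.coeff 2 * Q.coeff 1 - Q.coeff 2 * P.coeff 1 ≠ 0 := by
  intro hdet
  have hcoeff (k : F) : P.coeff 1 - k * Q.coeff 1 ≠ 0 ∨ P.coeff 2 - k * Q.coeff 2 ≠ 0 := by
    have hdeg : (P - C k * Q).natDegree ≤ 2 :=
      natDegree_sub_le_of_le hPdeg ((natDegree_C_mul_le k Q).trans hQdeg)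
    simpa only [coeff_sub, coeff_C_mul] using coeff_one_ne_zero_or_coeff_two_ne_zero (h k) hdeg
  rcases coeff_one_ne_zero_or_coeff_two_ne_zero hQ hQdeg with hQ₁ | hQ₂
  · refine (hcoeff (P.coeff 1 / Q.coeff 1)).elim (· ?_) (· ?_) <;> field_simp
    · ring
    · linear_combination hdet
  · refine (hcoeff (P.coeff 2 / Q.coeff 2)).elim (· ?_) (· ?_) <;> field_simp
    · linear_combination -hdet
    · ring

end Polynomial

theorem stmt_0_general {F : Type*} [Field F] [Fintype F] (hchar : ringChar F ≠ 2)
    (P Q : F[X]) (hQ : 0 < Q.natDegree)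
    (hPdeg : P.natDegree ≤ 2) (hQdeg : Q.natDegree ≤ 2)
    (h : ∀ k : F, 0 < (P - C k * Q).natDegree) :
    IsMaxSidon (polyGraph P Q) ∧ IsMaxSidon (polyGraph (X : F[X]) (X ^ 2)) := by
  have h2 : (2 : F) ≠ 0 := Ring.two_ne_zero hchar
  refine ⟨?_, by simpa [polyGraph] using isMaxSidon_range_sq h2⟩
  rw [polyGraph_eq_image hPdeg hQdeg]
  exact (isMaxSidon_range_sq h2).image_add_injective _
    (quadraticLinearPart_injective (coeff_det_ne_zero hQ hPdeg hQdeg h)) _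

/-- Cilleruelo's construction of maximum Sidon sets from pairs of
polynomials of degree at most 2; in particular `(x, x²)` is a maximum Sidon set. -/
theorem stmt_0 {F : Type*} [Field F] [Fintype F] (hchar : ringChar F ≠ 2)
    (P Q : F[X]) (hP : 0 < P.natDegree) (hQ : 0 < Q.natDegree)
    (hPdeg : P.natDegree ≤ 2) (hQdeg : Q.natDegree ≤ 2)
    (h : ∀ k : F, 0 < (P - C k * Q).natDegree) :
    IsMaxSidon (polyGraph P Q) ∧ IsMaxSidon (polyGraph (X : F[X]) (X ^ 2)) :=
  stmt_0_general hchar P Q hQ hPdeg hQdeg h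
end

section
/- Let p be an odd prime and Q ∈ F_p[x] with deg Q ≤ p − 1. If the set (x, Q) = {(x, Q(x)) : x ∈ F_p} is a maximum Sidon set over F_p × F_p, then Q has degree exactly 2. -/
open Polynomial

section GluckHelpers

variable {p : ℕ} [Fact p.Prime]

private lemma sum_pow_erase (s : ℕ) :
    ∑ h ∈ Finset.univ.erase (0 : ZMod p), h ^ s
      = if (p - 1) ∣ s then (-1 : ZMod p) else 0 := by
  have hp1 : 1 < p := (Fact.out : p.Prime).one_lt
  have hcard : (Finset.univ.erase (0 : ZMod p)).card = p - 1 := by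
    rw [Finset.card_erase_of_mem (Finset.mem_univ _), Finset.card_univ, ZMod.card]
  by_cases hdvd : (p - 1) ∣ s
  · rw [if_pos hdvd]
    obtain ⟨t, rfl⟩ := hdvd
    rw [Finset.sum_congr rfl (fun h hh => by
      rw [pow_mul, ZMod.pow_card_sub_one_eq_one (Finset.ne_of_mem_erase hh), one_pow])]
    rw [Finset.sum_const, hcard, nsmul_eq_mul, mul_one, Nat.cast_sub hp1.le,
      Nat.cast_one, ZMod.natCast_self, zero_sub]
  · rw [if_neg hdvd]
    have hpos : 0 < p - 1 := by omega
    have htlt : s % (p - 1) < p - 1 := Nat.mod_lt _ hpos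
    have htne : s % (p - 1) ≠ 0 := fun h0 => hdvd (Nat.dvd_of_mod_eq_zero h0)
    rw [Finset.sum_congr rfl (fun h hh =>
      pow_eq_pow_mod s (ZMod.pow_card_sub_one_eq_one (Finset.ne_of_mem_erase hh)))]
    have huniv : ∑ x : ZMod p, x ^ (s % (p - 1)) = 0 :=
      FiniteField.sum_pow_lt_card_sub_one (K := ZMod p) (s % (p - 1))
        (by rw [ZMod.card]; exact htlt)
    have hsplit : (∑ x ∈ Finset.univ.erase (0 : ZMod p), x ^ (s % (p - 1)))
        + (0 : ZMod p) ^ (s % (p - 1)) = ∑ x : ZMod p, x ^ (s % (p - 1)) :=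
      Finset.sum_erase_add Finset.univ _ (Finset.mem_univ 0)
    rw [zero_pow htne, add_zero, huniv] at hsplit
    exact hsplit

private lemma sum_eval_neg_coeff (P : (ZMod p)[X]) (hP : P.natDegree < 2 * (p - 1)) :
    ∑ x : ZMod p, P.eval x = -P.coeff (p - 1) := by
  have hp1 : 1 < p := (Fact.out : p.Prime).one_lt
  have hxs : ∀ i ∈ Finset.range (2 * (p - 1)), (∑ x : ZMod p, P.coeff i * x ^ i)
      = if i = p - 1 then -P.coeff (p - 1) else 0 := by
    intro i hi
    rw [← Finset.mul_sum]
    have hx : (∑ x : ZMod p, x ^ i) = if i = p - 1 then (-1 : ZMod p) else 0 := by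
      by_cases hi0 : i = 0
      · subst hi0
        rw [if_neg (by omega)]
        simp only [pow_zero, Finset.sum_const, Finset.card_univ, ZMod.card, nsmul_eq_mul,
          mul_one, ZMod.natCast_self]
      · have hsplit : (∑ x ∈ Finset.univ.erase (0 : ZMod p), x ^ i)
            = ∑ x : ZMod p, x ^ i := by
          have h := Finset.sum_erase_add Finset.univ (fun x : ZMod p => x ^ i)
            (Finset.mem_univ 0)
          simpa [zero_pow hi0] using h
        rw [← hsplit, sum_pow_erase]
        rcases eq_or_ne i (p - 1) with h | h
        · rw [if_pos h, if_pos (h ▸ dvd_refl _)]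
        · rw [if_neg h, if_neg ?_]
          rintro ⟨w, hw⟩
          rw [Finset.mem_range] at hi
          rcases w with _ | _ | w
          · simp at hw; omega
          · simp only [zero_add, mul_one] at hw; omega
          · have h2 : (p - 1) * (w + 1 + 1) = (p - 1) * w + 2 * (p - 1) := by ring
            omega
    rw [hx]
    rcases eq_or_ne i (p - 1) with h | h
    · rw [if_pos h, if_pos h, h, mul_neg_one]
    · rw [if_neg h, if_neg h, mul_zero]
  calc ∑ x : ZMod p, P.eval x
      = ∑ x : ZMod p, ∑ i ∈ Finset.range (2 * (p - 1)), P.coeff i * x ^ i :=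
        Finset.sum_congr rfl fun x _ => eval_eq_sum_range' hP x
    _ = ∑ i ∈ Finset.range (2 * (p - 1)), ∑ x : ZMod p, P.coeff i * x ^ i := Finset.sum_comm
    _ = ∑ i ∈ Finset.range (2 * (p - 1)), if i = p - 1 then -P.coeff (p - 1) else 0 :=
        Finset.sum_congr rfl hxs
    _ = -P.coeff (p - 1) := by
        rw [Finset.sum_ite_eq' (Finset.range (2 * (p - 1))) (p - 1)
          (fun _ => -P.coeff (p - 1)), if_pos (Finset.mem_range.mpr (by omega))]

private lemma sum_eval_zero (P : (ZMod p)[X]) (hP : P.natDegree < p - 1) :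
    ∑ x : ZMod p, P.eval x = 0 := by
  have hp1 : 1 < p := (Fact.out : p.Prime).one_lt
  rw [sum_eval_neg_coeff P (by omega),
    Polynomial.coeff_eq_zero_of_natDegree_lt (by omega), neg_zero]

private lemma coeff_aeval_X_mul_C (Q b : (ZMod p)[X]) (i : ℕ) :
    (Polynomial.aeval ((X : (ZMod p)[X][X]) * Polynomial.C b) Q).coeff i
      = Polynomial.C (Q.coeff i) * b ^ i := by
  induction Q using Polynomial.induction_on' with
  | add f g hf hg =>
    rw [map_add, Polynomial.coeff_add, hf, hg, Polynomial.coeff_add, map_add, add_mul]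
  | monomial n a =>
    rw [Polynomial.aeval_monomial, mul_pow, ← Polynomial.C_pow, Polynomial.coeff_monomial]
    have halg : (algebraMap (ZMod p) ((ZMod p)[X][X])) a = Polynomial.C (Polynomial.C a) := by
      simp [Polynomial.algebraMap_apply]
    rw [halg]
    have hre : Polynomial.C (Polynomial.C a) * ((X : (ZMod p)[X][X]) ^ n * Polynomial.C (b ^ n))
        = Polynomial.C (Polynomial.C a * b ^ n) * X ^ n := by
      rw [map_mul]; ring
    rw [hre, Polynomial.coeff_C_mul, Polynomial.coeff_X_pow]
    rcases eq_or_ne n i with rfl | h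
    · rw [if_pos rfl, if_pos rfl, mul_one]
    · rw [if_neg h, if_neg (Ne.symm h), mul_zero, map_zero, zero_mul]

private lemma natDegree_pow_sub_pow (i : ℕ) :
    ((((X : (ZMod p)[X]) + 1) ^ i - X ^ i)).natDegree ≤ i - 1 := by
  rw [Polynomial.natDegree_le_iff_coeff_eq_zero]
  intro N hN
  have hiN : i ≤ N := by omega
  rw [Polynomial.coeff_sub, Polynomial.coeff_X_add_one_pow, Polynomial.coeff_X_pow]
  rcases eq_or_ne N i with rfl | h
  · rw [Nat.choose_self, if_pos rfl, Nat.cast_one, sub_self]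
  · rw [Nat.choose_eq_zero_of_lt (by omega), if_neg h, Nat.cast_zero, sub_zero]

private lemma good_mul {P₁ P₂ : (ZMod p)[X][X]} {n₁ n₂ : ℕ}
    (h₁ : ∀ i, P₁.coeff i ≠ 0 → (P₁.coeff i).natDegree + n₁ ≤ i)
    (h₂ : ∀ i, P₂.coeff i ≠ 0 → (P₂.coeff i).natDegree + n₂ ≤ i) :
    ∀ i, (P₁ * P₂).coeff i ≠ 0 → ((P₁ * P₂).coeff i).natDegree + (n₁ + n₂) ≤ i := by
  intro i hne
  rw [Polynomial.coeff_mul] at hne ⊢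
  by_cases hbig : n₁ + n₂ ≤ i
  · have hb : ∀ x ∈ Finset.HasAntidiagonal.antidiagonal i,
        (P₁.coeff x.1 * P₂.coeff x.2).natDegree ≤ i - (n₁ + n₂) := by
      intro x hx
      have hx12 : x.1 + x.2 = i := Finset.HasAntidiagonal.mem_antidiagonal.mp hx
      rcases eq_or_ne (P₁.coeff x.1) 0 with h | h
      · simp [h]
      rcases eq_or_ne (P₂.coeff x.2) 0 with h' | h'
      · simp [h']
      have b1 := h₁ x.1 h
      have b2 := h₂ x.2 h'
      calc (P₁.coeff x.1 * P₂.coeff x.2).natDegree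
          ≤ (P₁.coeff x.1).natDegree + (P₂.coeff x.2).natDegree := Polynomial.natDegree_mul_le
        _ ≤ i - (n₁ + n₂) := by omega
    have := Polynomial.natDegree_sum_le_of_forall_le _ _ hb
    omega
  · exfalso
    apply hne
    apply Finset.sum_eq_zero
    intro x hx
    have hx12 : x.1 + x.2 = i := Finset.HasAntidiagonal.mem_antidiagonal.mp hx
    rcases eq_or_ne (P₁.coeff x.1) 0 with h | h
    · rw [h, zero_mul]
    rcases eq_or_ne (P₂.coeff x.2) 0 with h' | h'
    · rw [h', mul_zero]
    exfalso
    have := h₁ x.1 h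
    have := h₂ x.2 h'
    omega

private lemma good_pow {Φ : (ZMod p)[X][X]}
    (hΦ : ∀ i, Φ.coeff i ≠ 0 → (Φ.coeff i).natDegree + 1 ≤ i) (k : ℕ) :
    ∀ i, (Φ ^ k).coeff i ≠ 0 → ((Φ ^ k).coeff i).natDegree + k ≤ i := by
  induction k with
  | zero =>
    intro i h
    rw [pow_zero] at h ⊢
    rcases eq_or_ne i 0 with rfl | h0
    · simp
    · exact absurd (by rw [Polynomial.coeff_one, if_neg h0]) h
  | succ n ih =>
    intro i h
    rw [pow_succ] at h ⊢
    exact good_mul ih hΦ i h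

private lemma cast_choose_ne_zero {n r : ℕ} (hn : n < p) (hr : r ≤ n) :
    ((n.choose r : ℕ) : ZMod p) ≠ 0 := by
  rw [Ne, ZMod.natCast_eq_zero_iff]
  intro hdvd
  have h1 : p ∣ n.factorial := by
    have := Nat.choose_mul_factorial_mul_factorial hr
    exact this ▸ (hdvd.mul_right _).mul_right _
  exact absurd ((Fact.out : p.Prime).dvd_factorial.mp h1) (by omega)

private lemma key_coeff_ne_zero {d q e : ℕ} (hd3 : 3 ≤ d) (hq1 : 1 ≤ q)
    (hqe : d * q + e = p - 1) (he : e < d) :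
    ((((X : (ZMod p)[X]) + 1) ^ d - X ^ d) ^ (2 * q)).coeff (p - 1) ≠ 0 := by
  have hprime : p.Prime := Fact.out
  have hp1 : 1 < p := hprime.one_lt
  have h3q : 3 * q ≤ d * q := Nat.mul_le_mul_right q hd3
  set k := 2 * q with hk
  have hexp := sub_pow (((X : (ZMod p)[X]) + 1) ^ d) (X ^ d) k
  rw [hexp, Polynomial.finset_sum_coeff]
  have hterm : ∀ i ∈ Finset.range (k + 1),
      ((-1 : (ZMod p)[X]) ^ (i + k) * ((X + 1) ^ d) ^ i * (X ^ d) ^ (k - i)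
          * (k.choose i : (ZMod p)[X])).coeff (p - 1)
      = (-1 : ZMod p) ^ (i + k) * (k.choose i : ZMod p) *
          (if d * (k - i) ≤ p - 1
            then (((d * i).choose (p - 1 - d * (k - i)) : ℕ) : ZMod p) else 0) := by
    intro i _
    rw [← pow_mul, ← pow_mul]
    have hre : (-1 : (ZMod p)[X]) ^ (i + k) * (X + 1) ^ (d * i) * X ^ (d * (k - i))
          * (k.choose i : (ZMod p)[X])
        = Polynomial.C ((-1 : ZMod p) ^ (i + k) * (k.choose i : ZMod p))
          * ((X + 1) ^ (d * i) * X ^ (d * (k - i))) := by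
      rw [map_mul, map_pow, map_neg, map_one, Polynomial.C_eq_natCast]
      ring
    rw [hre, Polynomial.coeff_C_mul, Polynomial.coeff_mul_X_pow']
    congr 1
    split_ifs with hle
    · rw [Polynomial.coeff_X_add_one_pow]
    · rfl
  rw [Finset.sum_congr rfl hterm]
  rw [Finset.sum_eq_single_of_mem q (Finset.mem_range.mpr (by omega))]
  · have hdq : d * (k - q) = d * q := by
      congr 1; omega
    rw [hdq, if_pos (by omega)]
    have he' : p - 1 - d * q = e := by omega
    rw [he']
    have hdle : d ≤ d * q := Nat.le_mul_of_pos_right d (by omega)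
    refine mul_ne_zero (mul_ne_zero (pow_ne_zero _ (neg_ne_zero.mpr one_ne_zero)) ?_) ?_
    · exact cast_choose_ne_zero (by omega) (by omega)
    · exact cast_choose_ne_zero (by omega) (by omega)
  · intro i hi hne
    rw [Finset.mem_range] at hi
    rcases lt_or_gt_of_ne hne with hlt | hgt
    · have hki : q + 1 ≤ k - i := by omega
      have hbig : d * q + d ≤ d * (k - i) := by
        calc d * q + d = d * (q + 1) := by ring
          _ ≤ d * (k - i) := Nat.mul_le_mul_left d hki
      rw [if_neg (by omega)]
      exact mul_zero _
    · have hki : k - i ≤ q - 1 := by omega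
      have hB : d * (k - i) ≤ d * q - d := by
        calc d * (k - i) ≤ d * (q - 1) := Nat.mul_le_mul_left d hki
          _ = d * q - d := by rw [Nat.mul_sub_one]
      have hA : d * q + d ≤ d * i := by
        calc d * q + d = d * (q + 1) := by ring
          _ ≤ d * i := Nat.mul_le_mul_left d (by omega)
      have hAB : d * i + d * (k - i) = 2 * (d * q) := by
        have : d * i + d * (k - i) = d * k := by
          rw [← Nat.mul_add]; congr 1; omega
        rw [this, hk]; ring
      rw [if_pos (by omega)]
      have hdvd : p ∣ (d * i).choose (p - 1 - d * (k - i)) := by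
        refine hprime.dvd_choose (by omega) (by omega) (by omega)
      rw [(ZMod.natCast_eq_zero_iff _ _).mpr hdvd, mul_zero]

private lemma planar_of_sidon {Q : (ZMod p)[X]}
    (hs : IsSidon (polyGraph (X : (ZMod p)[X]) Q)) :
    ∀ t : ZMod p, t ≠ 0 →
      Function.Injective fun x : ZMod p => Q.eval (x + t) - Q.eval x := by
  intro t ht x y hxy
  simp only at hxy
  have mem : ∀ z : ZMod p, (z, Q.eval z) ∈ polyGraph (X : (ZMod p)[X]) Q :=
    fun z => ⟨z, by simp⟩
  have hdiff : ((x + t, Q.eval (x + t)) : ZMod p × ZMod p) - (x, Q.eval x)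
      = (y + t, Q.eval (y + t)) - (y, Q.eval y) := by
    rw [Prod.mk_sub_mk, Prod.mk_sub_mk, add_sub_cancel_left, add_sub_cancel_left, hxy]
  have hset := hs _ (mem (x + t)) _ (mem x) _ (mem (y + t)) _ (mem y) hdiff
  have hmem : ((x + t, Q.eval (x + t)) : ZMod p × ZMod p) ∈
      ({(x, Q.eval x), (y + t, Q.eval (y + t))} : Set (ZMod p × ZMod p)) := by
    rw [← hset]; exact Set.mem_insert _ _
  rcases hmem with h1 | h1
  · exfalso
    have h2 : x + t = x := congrArg Prod.fst h1
    exact ht (by simpa using h2)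
  · have h2 : x + t = y + t := congrArg Prod.fst (Set.mem_singleton_iff.mp h1)
    exact add_right_cancel h2

end GluckHelpers

/-- if `(x, Q)` is a maximum Sidon set over `F_p × F_p` (p an odd prime,
`deg Q ≤ p - 1`), then `Q` is quadratic. -/
theorem stmt_1 (p : ℕ) [Fact p.Prime] (hp : p ≠ 2) (Q : (ZMod p)[X])
    (hdeg : Q.natDegree ≤ p - 1)
    (h : IsMaxSidon (polyGraph (X : (ZMod p)[X]) Q)) :
    Q.natDegree = 2 := by
  have hprime : p.Prime := Fact.out
  have hp2 : 2 < p := lt_of_le_of_ne hprime.two_le (Ne.symm hp)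
  have planar := planar_of_sidon h.1
  rcases lt_or_ge Q.natDegree 2 with hlt | hge
  · -- degree ≤ 1 is impossible
    exfalso
    have hQ : Q = C (Q.coeff 1) * X + C (Q.coeff 0) :=
      Polynomial.eq_X_add_C_of_natDegree_le_one (by omega)
    have key : (0 : ZMod p) = 1 := by
      apply planar 1 one_ne_zero
      show Q.eval (0 + 1) - Q.eval 0 = Q.eval (1 + 1) - Q.eval 1
      rw [hQ]
      simp only [Polynomial.eval_add, Polynomial.eval_mul, Polynomial.eval_C, Polynomial.eval_X]
      ring
    exact one_ne_zero key.symm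
  rcases eq_or_lt_of_le hge with heq | hgt
  · exact heq.symm
  exfalso
  set d := Q.natDegree with hd
  have hd3 : 3 ≤ d := hgt
  set q := (p - 1) / d with hqdef
  set e := (p - 1) % d with hedef
  have hqe : d * q + e = p - 1 := Nat.div_add_mod (p - 1) d
  have he : e < d := Nat.mod_lt _ (by omega)
  have hq1 : 1 ≤ q := (Nat.one_le_div_iff (by omega)).mpr hdeg
  have h3q : 3 * q ≤ d * q := Nat.mul_le_mul_right q hd3
  have hdle : d ≤ d * q := Nat.le_mul_of_pos_right d (by omega)
  have h2e : 2 * e < p - 1 := by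
    rcases eq_or_lt_of_le hq1 with h1 | h2
    · have h1' := hqe
      rw [← h1, mul_one] at h1'
      omega
    · have hx : d * 2 ≤ d * q := Nat.mul_le_mul_left d h2
      omega
  set k := 2 * q with hkdef
  have hk2 : 2 ≤ k := by omega
  have hkd : k * d = 2 * (d * q) := by rw [hkdef]; ring
  have hkd2 : k * d + 2 * e = 2 * (p - 1) := by omega
  have hklt : k < p - 1 := by
    have h3k : 3 * k = 2 * (3 * q) := by rw [hkdef]; ring
    omega
  have hQne : Q ≠ 0 := fun h0 => by
    rw [h0] at hd
    simp at hd
    omega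
  set c := Q.coeff d with hcdef
  have hcne : c ≠ 0 := by
    rw [hcdef, hd]
    exact Polynomial.leadingCoeff_ne_zero.mpr hQne
  set g : (ZMod p)[X] := ((X : (ZMod p)[X]) + 1) ^ d - X ^ d with hgdef
  set Φ : (ZMod p)[X][X] :=
    Polynomial.aeval ((X : (ZMod p)[X][X]) * Polynomial.C ((X : (ZMod p)[X]) + 1)) Q
      - Polynomial.aeval ((X : (ZMod p)[X][X]) * Polynomial.C (X : (ZMod p)[X])) Q with hΦdef
  have hΦc : ∀ i, Φ.coeff i
      = Polynomial.C (Q.coeff i) * (((X : (ZMod p)[X]) + 1) ^ i - X ^ i) := by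
    intro i
    rw [hΦdef, Polynomial.coeff_sub, coeff_aeval_X_mul_C, coeff_aeval_X_mul_C, mul_sub]
  have hΦgood : ∀ i, Φ.coeff i ≠ 0 → (Φ.coeff i).natDegree + 1 ≤ i := by
    intro i hne
    rcases Nat.eq_zero_or_pos i with rfl | hipos
    · exfalso; apply hne; rw [hΦc]; simp
    · have h1 : (Φ.coeff i).natDegree ≤ i - 1 := by
        rw [hΦc]
        refine le_trans Polynomial.natDegree_mul_le ?_
        simpa using natDegree_pow_sub_pow (p := p) i
      omega
  have hψgood := good_pow hΦgood k
  have hΦdegle : Φ.natDegree ≤ d := by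
    rw [Polynomial.natDegree_le_iff_coeff_eq_zero]
    intro N hN
    rw [hΦc, Polynomial.coeff_eq_zero_of_natDegree_lt (hd ▸ hN), map_zero, zero_mul]
  have hψdeg : (Φ ^ k).natDegree ≤ k * d :=
    le_trans Polynomial.natDegree_pow_le (Nat.mul_le_mul_left k hΦdegle)
  have hdZ : ((d : ℕ) : ZMod p) ≠ 0 := by
    rw [Ne, ZMod.natCast_eq_zero_iff]
    intro hdvd
    have := Nat.le_of_dvd (by omega) hdvd
    omega
  have hgcoeff : g.coeff (d - 1) = (d : ZMod p) := by
    have hch : d.choose (d - 1) = d := by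
      have h1 := Nat.choose_symm (show d - 1 ≤ d by omega)
      rw [(by omega : d - (d - 1) = 1), Nat.choose_one_right] at h1
      exact h1.symm
    rw [hgdef, Polynomial.coeff_sub, Polynomial.coeff_X_add_one_pow,
      Polynomial.coeff_X_pow, if_neg (by omega), sub_zero, hch]
  have hgne : g ≠ 0 := fun h0 => hdZ (by rw [← hgcoeff, h0, Polynomial.coeff_zero])
  have hΦtopne : Φ.coeff d ≠ 0 := by
    rw [hΦc]
    refine mul_ne_zero ?_ ?_
    · rw [Ne, Polynomial.C_eq_zero]; exact hcne
    · exact hgne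
  have hΦdeg : Φ.natDegree = d :=
    le_antisymm hΦdegle (Polynomial.le_natDegree_of_ne_zero hΦtopne)
  have hψtop : (Φ ^ k).coeff (k * d) = Polynomial.C (c ^ k) * g ^ k := by
    have h1 := Polynomial.coeff_pow_mul_natDegree Φ k
    rw [hΦdeg] at h1
    rw [h1, Polynomial.leadingCoeff, hΦdeg, hΦc, mul_pow, ← Polynomial.C_pow]
  have hΦeval : ∀ t u : ZMod p, (Φ.eval (Polynomial.C t)).eval u
      = Q.eval (t * u + t) - Q.eval (t * u) := by
    intro t u
    have haux : ∀ s : (ZMod p)[X][X],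
        ((Polynomial.aeval s Q).eval (Polynomial.C t)).eval u
          = Q.eval ((s.eval (Polynomial.C t)).eval u) := by
      intro s
      have h1 : (Polynomial.aeval s Q).eval (Polynomial.C t)
          = Q.eval₂ ((Polynomial.evalRingHom (Polynomial.C t)).comp
              (algebraMap (ZMod p) ((ZMod p)[X][X]))) (s.eval (Polynomial.C t)) := by
        rw [Polynomial.aeval_def]
        exact Polynomial.hom_eval₂ Q (algebraMap (ZMod p) ((ZMod p)[X][X]))
          (Polynomial.evalRingHom (Polynomial.C t)) s
      have h2 : (Q.eval₂ ((Polynomial.evalRingHom (Polynomial.C t)).comp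
              (algebraMap (ZMod p) ((ZMod p)[X][X]))) (s.eval (Polynomial.C t))).eval u
          = Q.eval₂ ((Polynomial.evalRingHom u).comp
              ((Polynomial.evalRingHom (Polynomial.C t)).comp
                (algebraMap (ZMod p) ((ZMod p)[X][X]))))
              ((s.eval (Polynomial.C t)).eval u) :=
        Polynomial.hom_eval₂ Q _ (Polynomial.evalRingHom u) _
      have h3 : (Polynomial.evalRingHom u).comp
          ((Polynomial.evalRingHom (Polynomial.C t)).comp
            (algebraMap (ZMod p) ((ZMod p)[X][X]))) = RingHom.id (ZMod p) := by
        ext r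
        simp [Polynomial.algebraMap_apply]
      rw [h1, h2, h3]
      rfl
    rw [hΦdef, Polynomial.eval_sub, Polynomial.eval_sub, haux, haux]
    have e1 : ((((X : (ZMod p)[X][X]) * Polynomial.C ((X : (ZMod p)[X]) + 1)).eval
        (Polynomial.C t)).eval u) = t * u + t := by
      simp [mul_add]
    have e2 : ((((X : (ZMod p)[X][X]) * Polynomial.C (X : (ZMod p)[X])).eval
        (Polynomial.C t)).eval u) = t * u := by
      simp
    rw [e1, e2]
  have hexp : ∀ t u : ZMod p, (Q.eval (t * u + t) - Q.eval (t * u)) ^ k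
      = ∑ j ∈ Finset.range (k * d + 1), ((Φ ^ k).coeff j).eval u * t ^ j := by
    intro t u
    rw [← hΦeval t u, ← Polynomial.eval_pow, ← Polynomial.eval_pow]
    rw [Polynomial.eval_eq_sum_range' (lt_of_le_of_lt hψdeg (Nat.lt_succ_self _))
      (Polynomial.C t)]
    rw [Polynomial.eval_finset_sum]
    refine Finset.sum_congr rfl fun j _ => ?_
    rw [← Polynomial.C_pow, Polynomial.eval_mul, Polynomial.eval_C]
  have hkey : ∑ j ∈ Finset.range (k * d + 1),
      (∑ u : ZMod p, ((Φ ^ k).coeff j).eval u)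
        * (∑ t ∈ Finset.univ.erase (0 : ZMod p), t ^ (2 * e + j)) = 0 := by
    have h0 : ∑ t ∈ Finset.univ.erase (0 : ZMod p),
        (t ^ (2 * e) * ∑ u : ZMod p, (Q.eval (t * u + t) - Q.eval (t * u)) ^ k) = 0 := by
      refine Finset.sum_eq_zero fun t ht => ?_
      have htne : t ≠ 0 := Finset.ne_of_mem_erase ht
      have hbij : Function.Bijective fun x : ZMod p => Q.eval (x + t) - Q.eval x :=
        Finite.injective_iff_bijective.mp (planar t htne)
      have hre : (∑ u : ZMod p, (Q.eval (t * u + t) - Q.eval (t * u)) ^ k)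
          = ∑ x : ZMod p, (Q.eval (x + t) - Q.eval x) ^ k := by
        rw [← Equiv.sum_comp (Equiv.mulLeft₀ t htne)
          (fun x : ZMod p => (Q.eval (x + t) - Q.eval x) ^ k)]
        rfl
      have hre2 : (∑ x : ZMod p, (Q.eval (x + t) - Q.eval x) ^ k) = ∑ y : ZMod p, y ^ k :=
        Fintype.sum_bijective _ hbij _ _ fun x => rfl
      rw [hre, hre2, FiniteField.sum_pow_lt_card_sub_one (K := ZMod p) k
        (by rw [ZMod.card]; exact hklt), mul_zero]
    have h1 : ∀ t ∈ Finset.univ.erase (0 : ZMod p),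
        (t ^ (2 * e) * ∑ u : ZMod p, (Q.eval (t * u + t) - Q.eval (t * u)) ^ k)
        = ∑ j ∈ Finset.range (k * d + 1),
            (∑ u : ZMod p, ((Φ ^ k).coeff j).eval u) * t ^ (2 * e + j) := by
      intro t _
      rw [Finset.sum_congr rfl fun u _ => hexp t u, Finset.sum_comm, Finset.mul_sum]
      refine Finset.sum_congr rfl fun j _ => ?_
      rw [← Finset.sum_mul, pow_add]
      ring
    calc ∑ j ∈ Finset.range (k * d + 1),
        (∑ u : ZMod p, ((Φ ^ k).coeff j).eval u)
          * (∑ t ∈ Finset.univ.erase (0 : ZMod p), t ^ (2 * e + j))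
        = ∑ j ∈ Finset.range (k * d + 1), ∑ t ∈ Finset.univ.erase (0 : ZMod p),
            (∑ u : ZMod p, ((Φ ^ k).coeff j).eval u) * t ^ (2 * e + j) :=
          Finset.sum_congr rfl fun j _ => Finset.mul_sum _ _ _
      _ = ∑ t ∈ Finset.univ.erase (0 : ZMod p), ∑ j ∈ Finset.range (k * d + 1),
            (∑ u : ZMod p, ((Φ ^ k).coeff j).eval u) * t ^ (2 * e + j) := Finset.sum_comm
      _ = ∑ t ∈ Finset.univ.erase (0 : ZMod p),
            (t ^ (2 * e) * ∑ u : ZMod p, (Q.eval (t * u + t) - Q.eval (t * u)) ^ k) :=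
          (Finset.sum_congr rfl h1).symm
      _ = 0 := h0
  have hmain : (∑ u : ZMod p, ((Φ ^ k).coeff (k * d)).eval u)
      * (∑ t ∈ Finset.univ.erase (0 : ZMod p), t ^ (2 * e + k * d)) = 0 := by
    have hsingle : ∑ j ∈ Finset.range (k * d + 1),
        (∑ u : ZMod p, ((Φ ^ k).coeff j).eval u)
          * (∑ t ∈ Finset.univ.erase (0 : ZMod p), t ^ (2 * e + j))
        = (∑ u : ZMod p, ((Φ ^ k).coeff (k * d)).eval u)
          * (∑ t ∈ Finset.univ.erase (0 : ZMod p), t ^ (2 * e + k * d)) := by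
      apply Finset.sum_eq_single_of_mem (k * d) (Finset.mem_range.mpr (Nat.lt_succ_self _))
      intro j hj hjne
      by_cases hdvd : (p - 1) ∣ (2 * e + j)
      · have hjle : 2 * e + j ≤ p - 1 := by
          obtain ⟨w, hw⟩ := hdvd
          rw [Finset.mem_range] at hj
          rcases w with _ | _ | w
          · simp at hw; omega
          · simp only [zero_add, mul_one] at hw; omega
          · have hx2 : (p - 1) * (w + 1 + 1) = (p - 1) * w + 2 * (p - 1) := by ring
            omega
        rcases eq_or_ne ((Φ ^ k).coeff j) 0 with hz | hz
        · rw [hz]; simp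
        · have hgd := hψgood j hz
          rw [sum_eval_zero _ (by omega), zero_mul]
      · rw [sum_pow_erase, if_neg hdvd, mul_zero]
    exact hsingle.symm.trans hkey
  have hdvd2 : (p - 1) ∣ (2 * e + k * d) := ⟨2, by omega⟩
  rw [sum_pow_erase, if_pos hdvd2, mul_neg_one, neg_eq_zero] at hmain
  rw [hψtop] at hmain
  have hg0 : ∑ u : ZMod p, (g ^ k).eval u = 0 := by
    have h2 : ∀ u : ZMod p, (Polynomial.C (c ^ k) * g ^ k).eval u
        = c ^ k * (g ^ k).eval u := by
      intro u; rw [Polynomial.eval_mul, Polynomial.eval_C]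
    rw [Finset.sum_congr rfl fun u _ => h2 u, ← Finset.mul_sum] at hmain
    exact (mul_eq_zero.mp hmain).resolve_left (pow_ne_zero _ hcne)
  have hgdeg : (g ^ k).natDegree < 2 * (p - 1) := by
    have h1 : g.natDegree ≤ d - 1 := natDegree_pow_sub_pow d
    have h2 : (g ^ k).natDegree ≤ k * (d - 1) :=
      le_trans Polynomial.natDegree_pow_le (Nat.mul_le_mul_left k h1)
    have h3 : k * (d - 1) + k = k * d := by
      rw [← Nat.mul_succ]
      congr 1
      omega
    omega
  have hcoeff0 : (g ^ k).coeff (p - 1) = 0 := by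
    have h4 := sum_eval_neg_coeff (g ^ k) hgdeg
    rw [hg0] at h4
    exact neg_eq_zero.mp h4.symm
  exact key_coeff_ne_zero hd3 hq1 hqe he (by rw [← hkdef, ← hgdef]; exact hcoeff0)
end

section
/- Let q be a power of an odd prime and P ∈ F_q[x] a Sidon polynomial over F_q × F_q. Then d_0(P) ≤ 2q − 1 and d_r(P) ≤ q for every nonzero r ∈ F_q. Moreover, for every r ∈ F_q one has d_r(P) = Σ_{i ∈ F_q} v_i(P) · v_{i+r}(P), so that Σ_{i ∈ F_q} v_i(P) v_i(P) ≤ 2q − 1 and Σ_{i ∈ F_q} v_i(P) v_{i+r}(P) ≤ q for r ≠ 0. -/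
open Polynomial

/-- `d_r(P)`: the number of pairs `(a,b)` with `P(a) - P(b) = r`. -/
def dCount {F : Type*} [Field F] [Fintype F] [DecidableEq F] (P : F[X]) (r : F) : ℕ :=
  (Finset.univ.filter fun ab : F × F => P.eval ab.1 - P.eval ab.2 = r).card

/-- `v_r(P)`: the number of `x ∈ F` with `P(x) = r`. -/
def vCount {F : Type*} [Field F] [Fintype F] [DecidableEq F] (P : F[X]) (r : F) : ℕ :=
  (Finset.univ.filter fun x : F => P.eval x = r).card

/-- if `P` is a Sidon polynomial, then `d_0(P) ≤ 2q - 1`,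
`d_r(P) ≤ q` for `r ≠ 0`, and `d_r(P) = Σ_i v_i v_{i+r}`, whence the
corresponding bounds on the sums. -/
theorem stmt_9 {F : Type*} [Field F] [Fintype F] [DecidableEq F]
    (hchar : ringChar F ≠ 2) (P : F[X]) (hP : IsSidonPoly P) :
    dCount P 0 ≤ 2 * Fintype.card F - 1 ∧
    (∀ r : F, r ≠ 0 → dCount P r ≤ Fintype.card F) ∧
    (∀ r : F, dCount P r = ∑ i : F, vCount P i * vCount P (i + r)) ∧
    (∑ i : F, vCount P i * vCount P i) ≤ 2 * Fintype.card F - 1 ∧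
    (∀ r : F, r ≠ 0 → (∑ i : F, vCount P i * vCount P (i + r)) ≤ Fintype.card F) := by
  obtain ⟨Q, hSid, hcard⟩ := hP
  set f : F → F × F := fun x => (P.eval x, Q.eval x) with hf
  have hrange : polyGraph P Q = ↑(Finset.univ.image f) := by
    simp [polyGraph, hf, Finset.coe_image]
  have hinj : Function.Injective f := by
    have h1 : (Finset.univ.image f).card = (Finset.univ : Finset F).card := by
      rw [hrange, Set.ncard_coe_finset] at hcard
      simp [hcard, Finset.card_univ]
    rw [Finset.card_image_iff] at h1
    intro a b hab
    exact h1 (Finset.mem_univ a) (Finset.mem_univ b) hab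
  have key : ∀ a b a' b' : F, f a ≠ f b → f a - f b = f a' - f b' → a = a' ∧ b = b' := by
    intro a b a' b' hne hdiff
    have hset := hSid (f a) ⟨a, rfl⟩ (f b) ⟨b, rfl⟩ (f a') ⟨a', rfl⟩ (f b') ⟨b', rfl⟩ hdiff
    have hmem : f a ∈ ({f b, f a'} : Set (F × F)) := by
      rw [← hset]; exact Set.mem_insert _ _
    have haa' : f a = f a' := by
      rcases hmem with h | h
      · exact absurd h hne
      · exact h
    rw [← haa'] at hdiff
    have hbb' : f b = f b' := sub_right_inj.mp hdiff
    exact ⟨hinj haa', hinj hbb'⟩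
  have bound_ne : ∀ r : F, r ≠ 0 → dCount P r ≤ Fintype.card F := by
    intro r hr
    rw [dCount, ← Finset.card_univ]
    apply Finset.card_le_card_of_injOn (fun ab : F × F => Q.eval ab.1 - Q.eval ab.2)
      (fun _ _ => Finset.mem_univ _)
    intro ab h1 cd h2 hQeq
    have hp1 := (Finset.mem_filter.mp h1).2
    have hp2 := (Finset.mem_filter.mp h2).2
    have hfne : f ab.1 ≠ f ab.2 := by
      intro h
      apply hr
      rw [← hp1]
      have : P.eval ab.1 = P.eval ab.2 := congrArg Prod.fst h
      rw [this, sub_self]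
    have hdiff : f ab.1 - f ab.2 = f cd.1 - f cd.2 := by
      apply Prod.ext
      · simpa [hf] using hp1.trans hp2.symm
      · simpa [hf] using hQeq
    obtain ⟨h1', h2'⟩ := key _ _ _ _ hfne hdiff
    exact Prod.ext h1' h2'
  have identity : ∀ r : F, dCount P r = ∑ i : F, vCount P i * vCount P (i + r) := by
    intro r
    rw [dCount, Finset.card_eq_sum_card_fiberwise
      (f := fun ab : F × F => P.eval ab.2) (t := Finset.univ) (fun x _ => Finset.mem_univ _)]
    apply Finset.sum_congr rfl
    intro i _
    rw [Finset.filter_filter]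
    have heq : (Finset.univ.filter fun ab : F × F =>
          (P.eval ab.1 - P.eval ab.2 = r) ∧ P.eval ab.2 = i)
        = (Finset.univ.filter fun a : F => P.eval a = i + r) ×ˢ
          (Finset.univ.filter fun b : F => P.eval b = i) := by
      ext ab
      simp only [Finset.mem_filter, Finset.mem_univ, true_and, Finset.mem_product]
      constructor
      · rintro ⟨h1, h2⟩
        refine ⟨?_, h2⟩
        rw [h2] at h1
        have := sub_eq_iff_eq_add.mp h1
        rw [this, add_comm]
      · rintro ⟨h1, h2⟩
        exact ⟨by rw [h1, h2]; ring, h2⟩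
    rw [heq, Finset.card_product, vCount, vCount, mul_comm]
  have bound_zero : dCount P 0 ≤ 2 * Fintype.card F - 1 := by
    rw [dCount]
    set s0 : Finset (F × F) :=
      Finset.univ.filter fun ab : F × F => P.eval ab.1 - P.eval ab.2 = 0 with hs0
    have hsplit := Finset.card_filter_add_card_filter_not
      (s := s0) (p := fun ab : F × F => ab.1 = ab.2)
    have hdiag : (s0.filter fun ab : F × F => ab.1 = ab.2).card ≤ Fintype.card F := by
      rw [← Finset.card_univ]
      apply Finset.card_le_card_of_injOn (fun ab : F × F => ab.1)
        (fun _ _ => Finset.mem_univ _)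
      intro ab h1 cd h2 heq
      have e1 := (Finset.mem_filter.mp h1).2
      have e2 := (Finset.mem_filter.mp h2).2
      exact Prod.ext heq (by rw [← e1, ← e2]; exact heq)
    have hoff : (s0.filter fun ab : F × F => ¬ ab.1 = ab.2).card ≤ Fintype.card F - 1 := by
      have hcard' : (Finset.univ.filter fun x : F => x ≠ 0).card = Fintype.card F - 1 := by
        rw [Finset.filter_ne', Finset.card_erase_of_mem (Finset.mem_univ _), Finset.card_univ]
      rw [← hcard']
      apply Finset.card_le_card_of_injOn (fun ab : F × F => Q.eval ab.1 - Q.eval ab.2)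
      · intro ab hab
        have h1 := Finset.mem_filter.mp hab
        have hne := h1.2
        have hp := (Finset.mem_filter.mp h1.1).2
        have hpe : P.eval ab.1 = P.eval ab.2 := sub_eq_zero.mp hp
        simp only [Finset.mem_coe, Finset.mem_filter, Finset.mem_univ, true_and]
        intro hq
        apply hne
        have : f ab.1 = f ab.2 := Prod.ext hpe (sub_eq_zero.mp hq)
        exact hinj this
      · intro ab h1 cd h2 hQeq
        have hne := (Finset.mem_filter.mp h1).2
        have hp1 := (Finset.mem_filter.mp (Finset.mem_filter.mp h1).1).2
        have hp2 := (Finset.mem_filter.mp (Finset.mem_filter.mp h2).1).2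
        have hfne : f ab.1 ≠ f ab.2 := fun h => hne (hinj h)
        have hdiff : f ab.1 - f ab.2 = f cd.1 - f cd.2 := by
          apply Prod.ext
          · simpa [hf] using hp1.trans hp2.symm
          · simpa [hf] using hQeq
        obtain ⟨h1', h2'⟩ := key _ _ _ _ hfne hdiff
        exact Prod.ext h1' h2'
    have hq1 : 1 ≤ Fintype.card F := Fintype.card_pos
    omega
  refine ⟨bound_zero, bound_ne, identity, ?_, ?_⟩
  · have := identity 0
    simp only [add_zero] at this
    rw [← this]
    exact bound_zero
  · intro r hr
    rw [← identity r]
    exact bound_ne r hr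
end

section
/- Let q be a power of an odd prime and P ∈ F_q[x] a Sidon polynomial over F_q × F_q. Then for every r ∈ F_q, v_{2⁻¹r}(P) + Σ_{i ∈ F_q} v_i(P) · v_{r−i}(P) ≤ 2q, where 2⁻¹ is the inverse of 2 in F_q. -/
open Polynomial

section Aux

variable {F : Type*} [Field F] [Fintype F] [DecidableEq F]

lemma polyGraph_inj {P Q : F[X]} (h : IsMaxSidon (polyGraph P Q)) :
    Function.Injective fun x : F => (P.eval x, Q.eval x) := by
  have h2 := h.2
  have heq : polyGraph P Q = ↑(Finset.univ.image fun x : F => (P.eval x, Q.eval x)) := by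
    simp [polyGraph, Finset.coe_image, Set.image_univ]
  rw [heq, Set.ncard_coe_finset] at h2
  have hinj := Finset.card_image_iff.mp (by rw [h2, Finset.card_univ])
  rw [Finset.coe_univ] at hinj
  exact Set.injOn_univ.mp hinj

lemma sidon_key {P Q : F[X]} (h : IsMaxSidon (polyGraph P Q)) (x y u v : F)
    (hp : P.eval x + P.eval y = P.eval u + P.eval v)
    (hq : Q.eval x + Q.eval y = Q.eval u + Q.eval v) :
    (x = u ∧ y = v) ∨ (x = v ∧ y = u) := by
  have finj := polyGraph_inj h
  set f := fun x : F => (P.eval x, Q.eval x) with hf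
  have mem : ∀ z : F, f z ∈ polyGraph P Q := fun z => ⟨z, rfl⟩
  have hd : f x - f u = f v - f y := by
    simp only [hf, Prod.mk_sub_mk, Prod.mk.injEq]
    exact ⟨by linear_combination hp, by linear_combination hq⟩
  have hset := h.1 (f x) (mem x) (f u) (mem u) (f v) (mem v) (f y) (mem y) hd
  rcases Set.pair_eq_pair_iff.mp hset with ⟨h1, h2⟩ | ⟨h1, h2⟩
  · exact Or.inl ⟨finj h1, finj h2⟩
  · exact Or.inr ⟨finj h1, finj h2⟩

end Aux

/-- if `P` is a Sidon polynomial, then for every `r`,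
`v_{2⁻¹ r}(P) + Σ_i v_i(P) v_{r-i}(P) ≤ 2q`. -/
theorem stmt_10 {F : Type*} [Field F] [Fintype F] [DecidableEq F]
    (hchar : ringChar F ≠ 2) (P : F[X]) (hP : IsSidonPoly P) (r : F) :
    vCount P ((2 : F)⁻¹ * r) + ∑ i : F, vCount P i * vCount P (r - i) ≤
      2 * Fintype.card F := by

  classical
  obtain ⟨Q, hQ⟩ := hP
  have h2 : (2 : F) ≠ 0 := Ring.two_ne_zero hchar
  set T : Finset (F × F) := Finset.univ.filter (fun p : F × F => P.eval p.1 + P.eval p.2 = r)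
    with hT
  set D : Finset F := Finset.univ.filter (fun x : F => P.eval x = (2 : F)⁻¹ * r) with hD
  have hDmem : ∀ x : F, x ∈ D ↔ P.eval x + P.eval x = r := by
    intro x
    simp only [hD, Finset.mem_filter, Finset.mem_univ, true_and]
    constructor
    · intro h; rw [h]; field_simp; ring
    · intro h
      have : (2 : F) * P.eval x = r := by ring_nf; linear_combination h
      field_simp
      linear_combination this
  have hTmem : ∀ p : F × F, p ∈ T ↔ P.eval p.1 + P.eval p.2 = r := by
    intro p; simp [hT]
  -- card T = sum
  have hTcard : T.card = ∑ i : F, vCount P i * vCount P (r - i) := by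
    rw [Finset.card_eq_sum_card_fiberwise
      (f := fun p : F × F => P.eval p.1) (t := Finset.univ) (fun p _ => Finset.mem_univ _)]
    refine Finset.sum_congr rfl fun i _ => ?_
    have hfib : T.filter (fun p : F × F => P.eval p.1 = i) =
        (Finset.univ.filter fun x : F => P.eval x = i) ×ˢ
          (Finset.univ.filter fun x : F => P.eval x = r - i) := by
      ext p
      simp only [hT, Finset.mem_filter, Finset.mem_univ, true_and, Finset.mem_product]
      constructor
      · rintro ⟨hsum, hi⟩
        exact ⟨hi, by rw [← hsum, hi]; ring⟩
      · rintro ⟨hi, hri⟩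
        exact ⟨by rw [hi, hri]; ring, hi⟩
    rw [hfib, Finset.card_product]
    rfl
  have hvD : vCount P ((2 : F)⁻¹ * r) = D.card := rfl
  rw [hvD, ← hTcard]
  -- main counting argument
  let e := Fintype.equivFin F
  let H : (F × F) ⊕ F → F × Bool :=
    Sum.elim (fun p => (Q.eval p.1 + Q.eval p.2, decide (e p.1 ≤ e p.2)))
      (fun x => (Q.eval x + Q.eval x, false))
  have hinj : Set.InjOn H ↑(T.disjSum D) := by
    intro a ha b hb hab
    rw [Finset.mem_coe] at ha hb
    have key := sidon_key hQ
    rcases a with ⟨x, y⟩ | x <;> rcases b with ⟨u, v⟩ | u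
    · -- inl inl
      have hxy : P.eval x + P.eval y = r := (hTmem _).mp (Finset.inl_mem_disjSum.mp ha)
      have huv : P.eval u + P.eval v = r := (hTmem _).mp (Finset.inl_mem_disjSum.mp hb)
      simp only [H, Sum.elim_inl, Prod.mk.injEq] at hab
      obtain ⟨hq, hbool⟩ := hab
      rcases key x y u v (by rw [hxy, huv]) hq with ⟨h1, h2⟩ | ⟨h1, h2⟩
      · rw [h1, h2]
      · -- x = v, y = u : show booleans force x = y
        have hxeqy : x = y := by
          by_contra hne
          have hexy : e x ≠ e y := fun hh => hne (e.injective hh)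
          rcases le_or_gt (e x) (e y) with hle | hlt
          · have h1' : decide (e x ≤ e y) = true := decide_eq_true hle
            rw [h1'] at hbool
            have : e u ≤ e v := of_decide_eq_true hbool.symm
            rw [← h2, ← h1] at this
            exact hne (e.injective (le_antisymm hle this))
          · have h1' : decide (e x ≤ e y) = false := by
              simp [not_le.mpr hlt]
            rw [h1'] at hbool
            have : ¬ (e u ≤ e v) := of_decide_eq_false hbool.symm
            rw [← h2, ← h1] at this
            exact this hlt.le
        subst hxeqy
        rw [← h1, ← h2]
    · -- inl inr
      have hxy : P.eval x + P.eval y = r := (hTmem _).mp (Finset.inl_mem_disjSum.mp ha)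
      have huu : P.eval u + P.eval u = r := (hDmem _).mp (Finset.inr_mem_disjSum.mp hb)
      simp only [H, Sum.elim_inl, Sum.elim_inr, Prod.mk.injEq] at hab
      obtain ⟨hq, hbool⟩ := hab
      have hne : x ≠ y := by
        intro hh
        subst hh
        simp at hbool
      rcases key x y u u (by rw [hxy, huu]) hq with ⟨h1, h2⟩ | ⟨h1, h2⟩ <;>
        exact absurd (h1.trans h2.symm) hne
    · -- inr inl
      have huu : P.eval x + P.eval x = r := (hDmem _).mp (Finset.inr_mem_disjSum.mp ha)
      have hxy : P.eval u + P.eval v = r := (hTmem _).mp (Finset.inl_mem_disjSum.mp hb)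
      simp only [H, Sum.elim_inl, Sum.elim_inr, Prod.mk.injEq] at hab
      obtain ⟨hq, hbool⟩ := hab
      have hne : u ≠ v := by
        intro hh
        subst hh
        simp at hbool
      rcases key u v x x (by rw [hxy, huu]) hq.symm with ⟨h1, h2⟩ | ⟨h1, h2⟩ <;>
        exact absurd (h1.trans h2.symm) hne
    · -- inr inr
      have hxx : P.eval x + P.eval x = r := (hDmem _).mp (Finset.inr_mem_disjSum.mp ha)
      have huu : P.eval u + P.eval u = r := (hDmem _).mp (Finset.inr_mem_disjSum.mp hb)
      simp only [H, Sum.elim_inr, Prod.mk.injEq] at hab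
      rcases key x x u u (by rw [hxx, huu]) hab.1 with ⟨h1, _⟩ | ⟨h1, _⟩ <;> rw [h1]
  have hle := Finset.card_le_card_of_injOn H (fun a _ => Finset.mem_univ (H a)) hinj
  rw [Finset.card_disjSum] at hle
  have hcard : (Finset.univ : Finset (F × Bool)).card = 2 * Fintype.card F := by
    simp [Fintype.card_prod]
    ring
  omega
end

section
/- Let q be a prime power with char(F_q) > 3 and let r > 2 be a natural number with r dividing q − 1. Then the monomial P(x) = xʳ ∈ F_q[x] is not a Sidon polynomial over F_q × F_q. -/
/-!
If `(xʳ, Q)` were a maximum Sidon set and `c ≠ 1` an `r`-th root of unity, then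
`(xʳ, Q x) - ((c x)ʳ, Q (c x)) = (0, Q x - Q (c x))`, so the Sidon property makes
`x ↦ Q x - Q (c x)` an injection of `Fˣ` into itself, hence a bijection. For a primitive
`r`-th root `ζ` (which exists as `r ∣ q - 1`), the value `1` is then attained both with
`c = ζ` and with `c = ζ²`, and the Sidon property forces `ζ = ζ²`, impossible as `r > 2`.
-/

open Polynomial

theorem IsSidon.eq_of_sub_eq {G : Type*} [AddCommGroup G] {A : Set G} (hA : IsSidon A)
    {a₁ a₂ a₃ a₄ : G} (h₁ : a₁ ∈ A) (h₂ : a₂ ∈ A) (h₃ : a₃ ∈ A) (h₄ : a₄ ∈ A)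
    (hne : a₁ ≠ a₂) (h : a₁ - a₂ = a₃ - a₄) : a₁ = a₃ ∧ a₂ = a₄ := by
  have hmem : a₁ ∈ ({a₂, a₃} : Set G) := hA _ h₁ _ h₂ _ h₃ _ h₄ h ▸ Set.mem_insert _ _
  obtain rfl : a₁ = a₃ := by simpa [hne] using hmem
  exact ⟨rfl, sub_right_injective h⟩

theorem IsMaxSidon.injective_polyGraph {F : Type*} [Field F] [Fintype F] {P Q : F[X]}
    (h : IsMaxSidon (polyGraph P Q)) : Function.Injective fun x : F => (P.eval x, Q.eval x) := by
  rw [← Set.injOn_univ, ← Set.ncard_image_iff, Set.image_univ, Set.ncard_univ,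
    Nat.card_eq_fintype_card]
  exact h.2

theorem exists_isPrimitiveRoot_of_dvd_card_sub_one {F : Type*} [Field F] [Fintype F] {r : ℕ}
    (h : r ∣ Fintype.card F - 1) : ∃ ζ : F, IsPrimitiveRoot ζ r := by
  classical
  obtain ⟨g, hg⟩ := IsCyclic.exists_ofOrder_eq_natCard (α := Fˣ)
  rw [Nat.card_eq_fintype_card, Fintype.card_units] at hg
  obtain ⟨k, hk⟩ := h
  have hpos : 0 < Fintype.card F - 1 := Nat.sub_pos_of_lt Fintype.one_lt_card
  refine ⟨(g ^ k : Fˣ), ?_⟩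
  exact IsPrimitiveRoot.coe_units_iff.mpr
    ((IsPrimitiveRoot.iff_orderOf.mpr hg).pow hpos (hk.trans (mul_comm _ _)))

section RootsOfUnity

variable {F : Type*} [Field F] [Fintype F] {r : ℕ} {Q : F[X]}

theorem IsMaxSidon.sub_eval_mul_ne_zero (hQ : IsMaxSidon (polyGraph ((X : F[X]) ^ r) Q))
    {c x : F} (hc : c ^ r = 1) (hc1 : c ≠ 1) (hx : x ≠ 0) :
    Q.eval x - Q.eval (c * x) ≠ 0 := by
  intro h
  have hcx : c * x = x :=
    hQ.injective_polyGraph (by simp [mul_pow, hc, sub_eq_zero.mp h])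
  exact hc1 (mul_right_cancel₀ hx (by simpa using hcx))

theorem IsMaxSidon.eq_of_sub_eval_mul_eq (hQ : IsMaxSidon (polyGraph ((X : F[X]) ^ r) Q))
    {c c' x y : F} (hc : c ^ r = 1) (hc' : c' ^ r = 1) (hc1 : c ≠ 1) (hx : x ≠ 0)
    (h : Q.eval x - Q.eval (c * x) = Q.eval y - Q.eval (c' * y)) : x = y ∧ c = c' := by
  have hmem (z : F) : (z ^ r, Q.eval z) ∈ polyGraph ((X : F[X]) ^ r) Q := ⟨z, by simp⟩
  have hne : (x ^ r, Q.eval x) ≠ ((c * x) ^ r, Q.eval (c * x)) := fun he =>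
    hQ.sub_eval_mul_ne_zero hc hc1 hx (sub_eq_zero.mpr (Prod.ext_iff.mp he).2)
  obtain ⟨hxy, hcxy⟩ := hQ.1.eq_of_sub_eq (hmem x) (hmem (c * x)) (hmem y) (hmem (c' * y)) hne
    (by simp [mul_pow, hc, hc', h])
  have hinj := hQ.injective_polyGraph
  obtain rfl : x = y := hinj (by simpa using hxy)
  exact ⟨rfl, mul_right_cancel₀ hx (hinj (by simpa using hcxy))⟩

theorem IsMaxSidon.exists_sub_eval_mul_eq (hQ : IsMaxSidon (polyGraph ((X : F[X]) ^ r) Q))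
    {c t : F} (hc : c ^ r = 1) (hc1 : c ≠ 1) (ht : t ≠ 0) :
    ∃ x ≠ 0, Q.eval x - Q.eval (c * x) = t := by
  let D : Fˣ → Fˣ := fun x => Units.mk0 _ (hQ.sub_eval_mul_ne_zero hc hc1 x.ne_zero)
  have hD : Function.Injective D := fun x y hxy =>
    Units.ext (hQ.eq_of_sub_eval_mul_eq hc hc hc1 x.ne_zero (Units.ext_iff.mp hxy)).1
  obtain ⟨x, hx⟩ := Finite.surjective_of_injective hD (Units.mk0 t ht)
  exact ⟨x, x.ne_zero, Units.ext_iff.mp hx⟩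

end RootsOfUnity

theorem stmt_11_general {F : Type*} [Field F] [Fintype F]
    (r : ℕ) (hr : 2 < r) (hdvd : r ∣ Fintype.card F - 1) :
    ¬ IsSidonPoly ((X : F[X]) ^ r) := by
  rintro ⟨Q, hQ⟩
  obtain ⟨ζ, hζ⟩ := exists_isPrimitiveRoot_of_dvd_card_sub_one hdvd
  have hζ1 : ζ ≠ 1 := hζ.ne_one (by omega)
  have hζ2 : ζ ^ 2 ≠ 1 := hζ.pow_ne_one_of_pos_of_lt two_ne_zero hr
  have hζr2 : (ζ ^ 2) ^ r = 1 := by rw [pow_right_comm, hζ.pow_eq_one, one_pow]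
  obtain ⟨x, hx, hx1⟩ := hQ.exists_sub_eval_mul_eq hζ.pow_eq_one hζ1 one_ne_zero
  obtain ⟨y, -, hy1⟩ := hQ.exists_sub_eval_mul_eq hζr2 hζ2 one_ne_zero
  have hζζ2 : ζ ^ 1 = ζ ^ 2 := by
    simpa using (hQ.eq_of_sub_eval_mul_eq hζ.pow_eq_one hζr2 hζ1 hx (hx1.trans hy1.symm)).2
  have := hζ.pow_inj (by omega) hr hζζ2
  omega

/-- over a field of characteristic `> 3`, if `r > 2` divides `q - 1`,
then `xʳ` is not a Sidon polynomial. -/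
theorem stmt_11 {F : Type*} [Field F] [Fintype F] (hchar : 3 < ringChar F)
    (r : ℕ) (hr : 2 < r) (hdvd : r ∣ Fintype.card F - 1) :
    ¬ IsSidonPoly ((X : F[X]) ^ r) :=
  stmt_11_general r hr hdvd
end

section
/- Let q be a prime power with char(F_q) > 3 and let k ∈ F_q be a nonsquare. Every polynomial P ∈ F_q[x] of degree 3 is Sidon equivalent to exactly one of x³, x³ − x, and x³ − kx; in particular these three polynomials are pairwise not Sidon equivalent. -/
set_option linter.unusedSectionVars false
set_option maxHeartbeats 1000000


open Polynomial

section AuxSidon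



open Finset

variable {F : Type*} [Field F] [Fintype F]

lemma small_ne (hchar : 3 < ringChar F) : (3 : F) ≠ 0 ∧ (2 : F) ≠ 0 := by
  haveI := ringChar.charP F
  constructor <;> intro h0
  · have h1 : ((3 : ℕ) : F) = 0 := by exact_mod_cast h0
    have h2 := (CharP.cast_eq_zero_iff F (ringChar F) 3).1 h1
    have := Nat.le_of_dvd (by norm_num) h2
    omega
  · have h1 : ((2 : ℕ) : F) = 0 := by exact_mod_cast h0
    have h2 := (CharP.cast_eq_zero_iff F (ringChar F) 2).1 h1
    have := Nat.le_of_dvd (by norm_num) h2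
    omega

lemma nonsq_mul [DecidableEq F] {a b : F} (ha : ¬IsSquare a) (hb : ¬IsSquare b) :
    IsSquare (a * b) := by
  have ha0 : a ≠ 0 := fun h => ha (h ▸ IsSquare.zero)
  have hb0 : b ≠ 0 := fun h => hb (h ▸ IsSquare.zero)
  have h1 : quadraticChar F (a * b) = 1 := by
    rw [map_mul, quadraticChar_neg_one_iff_not_isSquare.2 ha,
      quadraticChar_neg_one_iff_not_isSquare.2 hb]; ring
  exact (quadraticChar_one_iff_isSquare (mul_ne_zero ha0 hb0)).1 h1

lemma not_isSquare_inv {k : F} (hk : ¬IsSquare k) : ¬IsSquare k⁻¹ := by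
  rintro ⟨t, ht⟩
  exact hk ⟨t⁻¹, by rw [← mul_inv, ← ht, inv_inv]⟩

lemma linear_perm (a b : F) (ha : a ≠ 0) : IsPermPoly (C a * X + C b) := by
  have he : (fun x : F => (C a * X + C b).eval x) = fun x : F => a * x + b := by
    funext x; simp
  rw [IsPermPoly, he]
  constructor
  · intro x y h
    simp only at h
    exact mul_left_cancel₀ ha (add_right_cancel h)
  · intro y
    exact ⟨(y - b) / a, by field_simp; ring⟩

lemma eval_cubic (P : F[X]) (hP : P.natDegree = 3) (t : F) :
    P.eval t = P.coeff 0 + P.coeff 1 * t + P.coeff 2 * t ^ 2 + P.coeff 3 * t ^ 3 := by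
  rw [eval_eq_sum_range, hP]
  simp [Finset.sum_range_succ]
  try ring

lemma exists_equiv [DecidableEq F] (hchar : 3 < ringChar F) {k : F} (hk : ¬IsSquare k)
    (P : F[X]) (hP : P.natDegree = 3) :
    SidonEquiv P ((X : F[X]) ^ 3) ∨ SidonEquiv P ((X : F[X]) ^ 3 - X) ∨
      SidonEquiv P ((X : F[X]) ^ 3 - C k * X) := by
  obtain ⟨h3, h2⟩ := small_ne hchar
  have hk0 : k ≠ 0 := fun h => hk (h ▸ IsSquare.zero)
  have hp3' : P.coeff 3 ≠ 0 := by
    have hne : P ≠ 0 := fun h => by simp [h] at hP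
    have := mt leadingCoeff_eq_zero.1 hne
    rwa [leadingCoeff, hP] at this
  obtain ⟨p0, p1, p2, p3, hp3, hev⟩ :
      ∃ p0 p1 p2 p3 : F, p3 ≠ 0 ∧ ∀ t, P.eval t = p0 + p1 * t + p2 * t ^ 2 + p3 * t ^ 3 :=
    ⟨_, _, _, _, hp3', eval_cubic P hP⟩
  have h3p3 : (3 : F) * p3 ≠ 0 := mul_ne_zero h3 hp3
  set β : F := -p2 / (3 * p3) with hβ
  set e : F := p1 - p2 ^ 2 / (3 * p3) with he
  have mk : ∀ (Q : F[X]) (α γ δ : F), α ≠ 0 → γ ≠ 0 →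
      (∀ x : F, Q.eval x = γ * P.eval (α * x + β) + δ) → SidonEquiv P Q := by
    intro Q α γ δ hα hγ hQ
    refine ⟨C γ * X + C δ, C α * X + C β, linear_perm γ δ hγ, linear_perm α β hα, fun x => ?_⟩
    simpa using hQ x
  by_cases he0 : e = 0
  · left
    refine mk _ 1 p3⁻¹ (-(p3⁻¹ * P.eval β)) one_ne_zero (inv_ne_zero hp3) fun x => ?_
    rw [he] at he0
    have hp1 : p1 = p2 ^ 2 / (3 * p3) := sub_eq_zero.1 he0
    have h2187 : (2187 : F) ≠ 0 := by
      have := pow_ne_zero 7 h3; norm_num at this; exact this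
    have hJ : (p3 : F) ^ 8 * p3⁻¹ ^ 8 * 2187⁻¹ * 2187 = 1 := by
      rw [← mul_pow, mul_inv_cancel₀ hp3, one_pow, one_mul, inv_mul_cancel₀ h2187]
    rw [eval_pow, eval_X, hev, hev, hp1, hβ]
    field_simp [h2187]
    linear_combination
  · have hw0 : -e / p3 ≠ 0 := div_ne_zero (neg_ne_zero.2 he0) hp3
    have h2187 : (2187 : F) ≠ 0 := by
      have := pow_ne_zero 7 h3; norm_num at this; exact this
    by_cases hsq : IsSquare (-e / p3)
    · right; left
      obtain ⟨s, hs⟩ := hsq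
      have hs0 : s ≠ 0 := by rintro rfl; rw [mul_zero] at hs; exact hw0 hs
      have hγ0 : (p3 * s ^ 3)⁻¹ ≠ 0 := inv_ne_zero (mul_ne_zero hp3 (pow_ne_zero _ hs0))
      refine mk _ s (p3 * s ^ 3)⁻¹ (-((p3 * s ^ 3)⁻¹ * P.eval β)) hs0 hγ0 fun x => ?_
      have hes : e = -(p3 * (s * s)) := by
        field_simp at hs
        linear_combination -hs
      rw [he] at hes
      have hp1 : p1 = p2 ^ 2 / (3 * p3) - p3 * (s * s) := by linear_combination hes
      have hJ2 : (p3 : F) ^ 8 * s ^ 3 * p3⁻¹ ^ 8 * s⁻¹ ^ 3 * 2187⁻¹ * 2187 = 1 := by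
        field_simp [h2187]
      rw [eval_sub, eval_pow, eval_X, hev, hev, hp1, hβ]
      field_simp [h2187]
      linear_combination
    · right; right
      have hsq2 : IsSquare (-e / p3 * k⁻¹) := nonsq_mul hsq (not_isSquare_inv hk)
      obtain ⟨s, hs⟩ := hsq2
      have hs0 : s ≠ 0 := by
        rintro rfl; rw [mul_zero] at hs
        exact (mul_ne_zero hw0 (inv_ne_zero hk0)) hs
      have hγ0 : (p3 * s ^ 3)⁻¹ ≠ 0 := inv_ne_zero (mul_ne_zero hp3 (pow_ne_zero _ hs0))
      refine mk _ s (p3 * s ^ 3)⁻¹ (-((p3 * s ^ 3)⁻¹ * P.eval β)) hs0 hγ0 fun x => ?_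
      have hes : e = -(p3 * k * (s * s)) := by
        field_simp at hs
        linear_combination -hs
      rw [he] at hes
      have hp1 : p1 = p2 ^ 2 / (3 * p3) - p3 * k * (s * s) := by linear_combination hes
      have hJ2 : (p3 : F) ^ 8 * s ^ 3 * p3⁻¹ ^ 8 * s⁻¹ ^ 3 * 2187⁻¹ * 2187 = 1 := by
        field_simp [h2187]
      rw [eval_sub, eval_pow, eval_X, eval_mul, eval_C, hev, hev, hp1, hβ]
      field_simp [h2187]
      linear_combination (-(k * p3 ^ 3 * s ^ 3 * 27)) * (eval_X : eval x (X : F[X]) = x)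


open Finset

variable {F : Type*} [Field F] [Fintype F] [DecidableEq F]

def Qf (p : F × F) : F := p.1 ^ 2 + p.1 * p.2 + p.2 ^ 2

def Ncnt (P : F[X]) : ℕ :=
  #(univ.filter fun p : F × F => p.1 ≠ p.2 ∧ P.eval p.1 = P.eval p.2)

def Mcnt (c : F) : ℕ := #(univ.filter fun p : F × F => Qf p = c)

def Dcnt (c : F) : ℕ := #(univ.filter fun x : F => 3 * x ^ 2 = c)

lemma ncnt_eq_of_equiv {P P' : F[X]} (h : SidonEquiv P P') : Ncnt P' = Ncnt P := by
  obtain ⟨R, T, hR, hT, hPT⟩ := h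
  apply Finset.card_bij (fun p _ => (T.eval p.1, T.eval p.2))
  · rintro ⟨x, y⟩ hxy
    simp only [mem_filter, mem_univ, true_and] at hxy ⊢
    refine ⟨fun hc => hxy.1 (hT.1 hc), ?_⟩
    have h1 := hPT x
    have h2 := hPT y
    rw [h1, h2] at hxy
    exact hR.1 hxy.2
  · rintro ⟨x, y⟩ hx ⟨x', y'⟩ hy hxy
    simp only [Prod.mk.injEq] at hxy ⊢
    exact ⟨hT.1 hxy.1, hT.1 hxy.2⟩
  · rintro ⟨u, v⟩ huv
    simp only [mem_filter, mem_univ, true_and] at huv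
    obtain ⟨x, hx⟩ := hT.2 u
    obtain ⟨y, hy⟩ := hT.2 v
    simp only at hx hy
    refine ⟨(x, y), ?_, by simp [hx, hy]⟩
    simp only [mem_filter, mem_univ, true_and]
    constructor
    · rintro rfl
      exact huv.1 (hx ▸ hy ▸ rfl)
    · rw [hPT x, hPT y, hx, hy, huv.2]

lemma ncnt_add_dcnt (a : F) (P : F[X]) (hP : ∀ x : F, P.eval x = x ^ 3 - a * x) :
    Ncnt P + Dcnt a = Mcnt a := by
  have h1 : Ncnt P = #(univ.filter fun p : F × F => Qf p = a ∧ p.1 ≠ p.2) := by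
    unfold Ncnt
    congr 1
    apply filter_congr
    rintro ⟨x, y⟩ -
    simp only [hP, Qf]
    constructor
    · rintro ⟨hne, heq⟩
      refine ⟨?_, hne⟩
      have hfac : (x - y) * (x ^ 2 + x * y + y ^ 2 - a) = 0 := by linear_combination heq
      rcases mul_eq_zero.1 hfac with h | h
      · exact absurd (sub_eq_zero.1 h) hne
      · linear_combination h
    · rintro ⟨heq, hne⟩
      exact ⟨hne, by linear_combination (x - y) * heq⟩
  have h2 : Dcnt a = #(univ.filter fun p : F × F => Qf p = a ∧ ¬p.1 ≠ p.2) := by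
    unfold Dcnt
    apply Finset.card_bij (fun x _ => (x, x))
    · intro x hx
      simp only [mem_filter, mem_univ, true_and, not_not] at hx ⊢
      refine ⟨?_, trivial⟩
      simp only [Qf]
      linear_combination hx
    · intro x _ y _ h
      exact (Prod.mk.injEq .. ▸ h).1
    · rintro ⟨x, y⟩ hxy
      simp only [mem_filter, mem_univ, true_and, not_not] at hxy
      obtain ⟨hq, rfl⟩ := hxy
      refine ⟨x, ?_, rfl⟩
      simp only [mem_filter, mem_univ, true_and]
      simp only [Qf] at hq
      linear_combination hq
  rw [h1, h2, ← filter_filter, ← filter_filter]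
  unfold Mcnt
  exact card_filter_add_card_filter_not (p := fun p : F × F => p.1 ≠ p.2)

lemma mcnt_scale {s : F} (hs : s ≠ 0) (c : F) : Mcnt (s ^ 2 * c) = Mcnt c := by
  symm
  have hinv : s * s⁻¹ = 1 := mul_inv_cancel₀ hs
  apply Finset.card_bij' (fun p _ => (s * p.1, s * p.2)) (fun q _ => (s⁻¹ * q.1, s⁻¹ * q.2))
  · rintro ⟨x, y⟩ h
    simp only [mem_filter, mem_univ, true_and] at h ⊢
    simp only [Qf] at h ⊢
    linear_combination s ^ 2 * h
  · rintro ⟨x, y⟩ h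
    simp only [mem_filter, mem_univ, true_and] at h ⊢
    simp only [Qf] at h ⊢
    linear_combination (s⁻¹ ^ 2) * h + c * (s * s⁻¹ + 1) * hinv
  · rintro ⟨x, y⟩ -
    simp only [Prod.mk.injEq]
    exact ⟨by linear_combination x * hinv, by linear_combination y * hinv⟩
  · rintro ⟨x, y⟩ -
    simp only [Prod.mk.injEq]
    exact ⟨by linear_combination x * hinv, by linear_combination y * hinv⟩

lemma mcnt_pos (hchar : 3 < ringChar F) (c : F) : 0 < Mcnt c := by
  obtain ⟨h3, h2⟩ := small_ne (F := F) hchar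
  have hodd : Fintype.card F % 2 = 1 :=
    FiniteField.odd_card_of_char_ne_two (by omega)
  have hdeg1 : ((X : F[X]) ^ 2).degree = 2 := by
    simpa using degree_X_pow 2
  have hdeg2 : ((C 3 * X ^ 2 - C (4 * c)) : F[X]).degree = 2 := by
    rw [sub_eq_add_neg, ← C_neg]
    rw [degree_add_C]
    · exact degree_C_mul_X_pow 2 h3
    · rw [degree_C_mul_X_pow 2 h3]; norm_num
  obtain ⟨u, v, huv⟩ := FiniteField.exists_root_sum_quadratic hdeg1 hdeg2 hodd
  simp only [eval_sub, eval_mul, eval_pow, eval_C, eval_X] at huv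
  unfold Mcnt
  rw [Finset.card_pos]
  refine ⟨((u - v) / 2, v), ?_⟩
  simp only [mem_filter, mem_univ, true_and]
  simp only [Qf]
  have h4 : (4 : F) ≠ 0 := by
    intro h
    have h22 : (2 : F) * 2 = 0 := by rw [← h]; norm_num
    rcases mul_eq_zero.1 h22 with h' | h' <;> exact h2 h'
  field_simp
  linear_combination huv

lemma mcnt_le {d : F} (hd : d ≠ 0) (p₀ : F × F) (h₀ : Qf p₀ = d) (c : F) :
    Mcnt c ≤ Mcnt (d * c) := by
  obtain ⟨x₀, y₀⟩ := p₀
  simp only [Qf] at h₀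
  apply Finset.card_le_card_of_injOn
    (fun p => (p.1 * x₀ - p.2 * y₀, p.1 * y₀ + p.2 * x₀ + p.2 * y₀))
  · rintro ⟨x, y⟩ hp
    simp only [mem_coe, mem_filter, mem_univ, true_and] at hp ⊢
    simp only [Qf] at hp ⊢
    linear_combination (x₀ ^ 2 + x₀ * y₀ + y₀ ^ 2) * hp + c * h₀
  · rintro ⟨x, y⟩ hx ⟨x', y'⟩ hy h
    simp only [Set.mem_setOf_eq, Prod.mk.injEq] at h
    obtain ⟨e1, e2⟩ := h
    have hx1 : x * d = x' * d := by
      rw [← h₀]; linear_combination (x₀ + y₀) * e1 + y₀ * e2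
    have hy1 : y * d = y' * d := by
      rw [← h₀]; linear_combination x₀ * e2 - y₀ * e1
    exact Prod.ext (mul_right_cancel₀ hd hx1) (mul_right_cancel₀ hd hy1)

lemma mcnt_k (hchar : 3 < ringChar F) {k : F} (hk0 : k ≠ 0) : Mcnt k = Mcnt (1 : F) := by
  obtain ⟨p₀, hp₀⟩ := Finset.card_pos.1 (mcnt_pos hchar k)
  obtain ⟨p₁, hp₁⟩ := Finset.card_pos.1 (mcnt_pos hchar k⁻¹)
  simp only [mem_filter, mem_univ, true_and] at hp₀ hp₁
  apply le_antisymm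
  · have := mcnt_le (inv_ne_zero hk0) p₁ hp₁ k
    rwa [inv_mul_cancel₀ hk0] at this
  · have := mcnt_le hk0 p₀ hp₀ 1
    rwa [mul_one] at this

lemma mcnt_sum (hchar : 3 < ringChar F) {k : F} (hk : ¬IsSquare k) :
    Fintype.card F * Fintype.card F = Mcnt (0 : F) + (Fintype.card F - 1) * Mcnt (1 : F) := by
  have hk0 : k ≠ 0 := fun h => hk (h ▸ IsSquare.zero)
  have htot : (univ : Finset (F × F)).card
      = ∑ c ∈ (univ : Finset F), #(univ.filter fun p : F × F => Qf p = c) :=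
    card_eq_sum_card_fiberwise fun p _ => mem_univ (Qf p)
  rw [card_univ, Fintype.card_prod] at htot
  have hconst : ∀ c ∈ univ.erase (0 : F),
      #(univ.filter fun p : F × F => Qf p = c) = Mcnt (1 : F) := by
    intro c hc
    have hc0 : c ≠ 0 := (mem_erase.1 hc).1
    show Mcnt c = Mcnt (1 : F)
    by_cases hcs : IsSquare c
    · obtain ⟨s, rfl⟩ := hcs
      have hs0 : s ≠ 0 := by rintro rfl; simp at hc0
      have h1 := mcnt_scale hs0 (1 : F)
      rw [show s * s = s ^ 2 * 1 by ring, h1]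
    · have h2 : IsSquare (c * k⁻¹) := nonsq_mul hcs (not_isSquare_inv hk)
      obtain ⟨s, hs⟩ := h2
      have hs0 : s ≠ 0 := by
        rintro rfl
        rw [mul_zero] at hs
        exact (mul_ne_zero hc0 (inv_ne_zero hk0)) hs
      have hc2 : c = s ^ 2 * k := by
        have hik : k * k⁻¹ = 1 := mul_inv_cancel₀ hk0
        linear_combination k * hs - c * hik
      rw [hc2, mcnt_scale hs0 k, mcnt_k hchar hk0]
  rw [← Finset.add_sum_erase _ _ (mem_univ (0 : F)), Finset.sum_congr rfl hconst,
    Finset.sum_const, card_erase_of_mem (mem_univ 0), card_univ, smul_eq_mul] at htot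
  exact htot

lemma dcnt_zero (h3 : (3 : F) ≠ 0) : Dcnt (0 : F) = 1 := by
  unfold Dcnt
  have : (univ.filter fun x : F => 3 * x ^ 2 = 0) = {0} := by
    ext x
    simp [mul_eq_zero, h3, pow_eq_zero_iff]
  rw [this, card_singleton]

lemma dcnt_two {a : F} (h2 : (2 : F) ≠ 0) (h3 : (3 : F) ≠ 0) (h : IsSquare (a / 3))
    (ha : a ≠ 0) : Dcnt a = 2 := by
  obtain ⟨s, hs⟩ := h
  have ha3 : a = 3 * (s * s) := by
    field_simp at hs
    linear_combination hs
  have hs0 : s ≠ 0 := by rintro rfl; rw [mul_zero, mul_zero] at ha3; exact ha ha3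
  have hset : (univ.filter fun x : F => 3 * x ^ 2 = a) = {s, -s} := by
    ext x
    simp only [mem_filter, mem_univ, true_and, mem_insert, mem_singleton]
    constructor
    · intro hx
      have hfac : (x - s) * (x + s) = 0 := by
        have h9 : 3 * x ^ 2 = 3 * (s * s) := by rw [hx, ha3]
        have := mul_left_cancel₀ h3 h9
        linear_combination this
      rcases mul_eq_zero.1 hfac with h | h
      · exact Or.inl (sub_eq_zero.1 h)
      · exact Or.inr (by linear_combination h)
    · rintro (rfl | rfl) <;> rw [ha3] <;> ring
  unfold Dcnt
  rw [hset, card_insert_of_notMem, card_singleton]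
  simp only [mem_singleton]
  intro hss
  have h2s : (2 : F) * s = 0 := by linear_combination hss
  rcases mul_eq_zero.1 h2s with h | h
  · exact h2 h
  · exact hs0 h

lemma dcnt_nonsq {a : F} (h3 : (3 : F) ≠ 0) (h : ¬IsSquare (a / 3)) : Dcnt a = 0 := by
  unfold Dcnt
  rw [Finset.card_eq_zero, Finset.filter_eq_empty_iff]
  intro x _
  intro hx
  apply h
  refine ⟨x, ?_⟩
  field_simp
  linear_combination -hx

lemma dcnt_split (h2 : (2 : F) ≠ 0) (h3 : (3 : F) ≠ 0) {k : F} (hk : ¬IsSquare k) :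
    (Dcnt (1 : F) = 2 ∧ Dcnt k = 0) ∨ (Dcnt (1 : F) = 0 ∧ Dcnt k = 2) := by
  have hk0 : k ≠ 0 := fun h => hk (h ▸ IsSquare.zero)
  have h30 : (1 : F) / 3 ≠ 0 := one_div_ne_zero h3
  by_cases h : IsSquare ((1 : F) / 3)
  · left
    refine ⟨dcnt_two h2 h3 h one_ne_zero, dcnt_nonsq h3 ?_⟩
    intro hks
    apply hk
    obtain ⟨s, hs⟩ := hks
    obtain ⟨t, ht⟩ := h
    have ht0 : t ≠ 0 := by rintro rfl; rw [mul_zero] at ht; exact h30 ht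
    refine ⟨s / t, ?_⟩
    have h31 : (3 : F) * (t * t) = 1 := by
      field_simp at ht
      linear_combination -ht
    have hti : t * t⁻¹ = 1 := mul_inv_cancel₀ ht0
    have hk3 : k = 3 * (s * s) := by
      field_simp at hs
      linear_combination hs
    linear_combination hk3 + (s ^ 2 * t⁻¹ ^ 2) * h31 - 3 * s ^ 2 * (t * t⁻¹ + 1) * hti
  · right
    refine ⟨dcnt_nonsq h3 h, dcnt_two h2 h3 ?_ hk0⟩
    have : IsSquare (k * (1 / 3)) := nonsq_mul hk h
    obtain ⟨s, hs⟩ := this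
    exact ⟨s, by rw [← hs]; ring⟩

lemma arith_contra (q n D : ℕ) (hq : 2 ≤ q) (hD : D = 0 ∨ D = 2)
    (h : q * q = (n + 1) + (q - 1) * (n + D)) : False := by
  obtain ⟨t, rfl⟩ : ∃ t, q = t + 2 := ⟨q - 2, by omega⟩
  have h' : (t + 2) * (t + 2) = n + 1 + (t + 1) * (n + D) := by
    have he : t + 2 - 1 = t + 1 := by omega
    rwa [he] at h
  rcases hD with rfl | rfl
  · have h2 : (t + 2) * (t + 2) = (t + 2) * n + 1 := by ring_nf at h' ⊢; linarith
    have hdvd : (t + 2) ∣ (t + 2) * n + 1 := by rw [← h2]; exact ⟨t + 2, rfl⟩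
    have := (Nat.dvd_add_right ⟨n, rfl⟩).mp hdvd
    have := Nat.le_of_dvd one_pos this
    omega
  · have h2 : (t + 2) * t + 1 = (t + 2) * n := by ring_nf at h' ⊢; linarith
    have hdvd : (t + 2) ∣ (t + 2) * t + 1 := by rw [h2]; exact ⟨n, rfl⟩
    have := (Nat.dvd_add_right ⟨t, rfl⟩).mp hdvd
    have := Nat.le_of_dvd one_pos this
    omega

lemma ncnt_ne (hchar : 3 < ringChar F) {k : F} (hk : ¬IsSquare k)
    {P0 P1 Pk : F[X]} (h0 : ∀ x : F, P0.eval x = x ^ 3 - 0 * x)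
    (h1 : ∀ x : F, P1.eval x = x ^ 3 - 1 * x)
    (hkk : ∀ x : F, Pk.eval x = x ^ 3 - k * x) :
    Ncnt P0 ≠ Ncnt P1 ∧ Ncnt P0 ≠ Ncnt Pk ∧ Ncnt P1 ≠ Ncnt Pk := by
  obtain ⟨h3, h2⟩ := small_ne (F := F) hchar
  have e0 := ncnt_add_dcnt 0 P0 h0
  have e1 := ncnt_add_dcnt 1 P1 h1
  have ek := ncnt_add_dcnt k Pk hkk
  rw [dcnt_zero h3] at e0
  have hMk : Mcnt k = Mcnt (1 : F) := mcnt_k hchar (fun h => hk (h ▸ IsSquare.zero))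
  rw [hMk] at ek
  have hsum := mcnt_sum hchar hk
  have hq : 2 ≤ Fintype.card F := Fintype.one_lt_card
  have harith : ∀ D : ℕ, D = 0 ∨ D = 2 → Mcnt (1 : F) = Ncnt P0 + D → False := by
    intro D hD hM
    have hM0 : Mcnt (0 : F) = Ncnt P0 + 1 := by omega
    rw [hM0, hM] at hsum
    exact arith_contra (Fintype.card F) (Ncnt P0) D hq hD hsum
  rcases dcnt_split h2 h3 hk with ⟨d1, dk⟩ | ⟨d1, dk⟩ <;>
      rw [d1] at e1 <;> rw [dk] at ek
  · exact ⟨fun h => harith 2 (Or.inr rfl) (by omega),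
      fun h => harith 0 (Or.inl rfl) (by omega), fun h => by omega⟩
  · exact ⟨fun h => harith 0 (Or.inl rfl) (by omega),
      fun h => harith 2 (Or.inr rfl) (by omega), fun h => by omega⟩

lemma not_equivs (hchar : 3 < ringChar F) {k : F} (hk : ¬IsSquare k) :
    ¬SidonEquiv ((X : F[X]) ^ 3) ((X : F[X]) ^ 3 - X) ∧
    ¬SidonEquiv ((X : F[X]) ^ 3) ((X : F[X]) ^ 3 - C k * X) ∧
    ¬SidonEquiv ((X : F[X]) ^ 3 - X) ((X : F[X]) ^ 3 - C k * X) := by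
  have h0 : ∀ x : F, ((X : F[X]) ^ 3).eval x = x ^ 3 - 0 * x := by
    intro x; rw [eval_pow, eval_X]; ring
  have h1 : ∀ x : F, ((X : F[X]) ^ 3 - X).eval x = x ^ 3 - 1 * x := by
    intro x; rw [eval_sub, eval_pow, eval_X]; ring
  have hkk : ∀ x : F, ((X : F[X]) ^ 3 - C k * X).eval x = x ^ 3 - k * x := by
    intro x; rw [eval_sub, eval_mul, eval_pow, eval_X, eval_C]
  obtain ⟨a, b, c⟩ := ncnt_ne hchar hk h0 h1 hkk
  exact ⟨fun h => a (ncnt_eq_of_equiv h).symm, fun h => b (ncnt_eq_of_equiv h).symm,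
    fun h => c (ncnt_eq_of_equiv h).symm⟩



end AuxSidon

/-- every cubic polynomial over a field of characteristic `> 3` is
Sidon equivalent to exactly one of `x³`, `x³ - x`, `x³ - kx` (`k` a nonsquare);
these three are pairwise inequivalent. -/
theorem stmt_14 {F : Type*} [Field F] [Fintype F] (hchar : 3 < ringChar F)
    (k : F) (hk : ¬ ∃ y : F, y ^ 2 = k)
    (P : F[X]) (hP : P.natDegree = 3) :
    (SidonEquiv P ((X : F[X]) ^ 3) ∨ SidonEquiv P ((X : F[X]) ^ 3 - X) ∨
      SidonEquiv P ((X : F[X]) ^ 3 - C k * X)) ∧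
    ¬ SidonEquiv ((X : F[X]) ^ 3) ((X : F[X]) ^ 3 - X) ∧
    ¬ SidonEquiv ((X : F[X]) ^ 3) ((X : F[X]) ^ 3 - C k * X) ∧
    ¬ SidonEquiv ((X : F[X]) ^ 3 - X) ((X : F[X]) ^ 3 - C k * X) := by
  letI : DecidableEq F := Classical.decEq F
  have hks : ¬IsSquare k := by
    rintro ⟨r, rfl⟩
    exact hk ⟨r, by ring⟩
  obtain ⟨a, b, c⟩ := not_equivs hchar hks
  exact ⟨exists_equiv hchar hks P hP, a, b, c⟩
end

section
/- Let q be a prime power with char(F_q) > 3. The polynomial P(x) = x³ ∈ F_q[x] is a Sidon polynomial over F_q × F_q if and only if q ≡ −1 (mod 6). -/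
open Polynomial

lemma sidon_eq {G : Type*} [AddCommGroup G] {A : Set G} (hS : IsSidon A)
    {a b c d : G} (ha : a ∈ A) (hb : b ∈ A) (hc : c ∈ A) (hd : d ∈ A)
    (h : a - b = c - d) (hab : a ≠ b) : a = c ∧ b = d := by
  have hset := hS a ha b hb c hc d hd h
  have hmem : a ∈ ({b, c} : Set G) := by
    rw [← hset]; exact Set.mem_insert a {d}
  rcases hmem with h1 | h1
  · exact absurd h1 hab
  · refine ⟨h1, ?_⟩
    rw [h1] at h
    exact sub_right_injective h

lemma ncard_range_eq_iff {F G : Type*} [Fintype F] [DecidableEq G] (f : F → G) :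
    (Set.range f).ncard = Fintype.card F ↔ Function.Injective f := by
  have h1 : Set.range f = ↑(Finset.univ.image f) := by
    rw [Finset.coe_image, Finset.coe_univ, Set.image_univ]
  rw [h1, Set.ncard_coe_finset, ← Finset.card_univ, Finset.card_image_iff,
    Finset.coe_univ, Set.injOn_univ]


/-- over a field of characteristic `> 3`, `x³` is a Sidon polynomial
iff `q ≡ -1 (mod 6)`. -/
theorem stmt_16 {F : Type*} [Field F] [Fintype F] (hchar : 3 < ringChar F) :
    IsSidonPoly ((X : F[X]) ^ 3) ↔ Fintype.card F % 6 = 5 := by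
  classical
  haveI : CharP F (ringChar F) := ringChar.charP F
  set q := Fintype.card F with hq
  obtain ⟨n, hp, hcard⟩ := FiniteField.card F (ringChar F)
  have hq1 : 1 ≤ q := Fintype.card_pos
  have hnd : ∀ r : ℕ, Nat.Prime r → r < ringChar F → ¬ r ∣ q := by
    intro r hr hlt hdvd
    rw [hq, hcard] at hdvd
    have := (Nat.prime_dvd_prime_iff_eq hr hp).mp (hr.dvd_of_dvd_pow hdvd)
    omega
  have h2 : ¬ 2 ∣ q := hnd 2 Nat.prime_two (by omega)
  have h3 : ¬ 3 ∣ q := hnd 3 Nat.prime_three (by omega)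
  have hunits : Fintype.card Fˣ = q - 1 := by
    rw [hq, ← Nat.card_eq_fintype_card, ← Nat.card_eq_fintype_card, Nat.card_units]
  constructor
  · rintro ⟨Q, hS, hncard⟩
    by_contra hq6
    have hq3 : q % 3 = 1 := by omega
    have h31 : 3 ∣ Fintype.card Fˣ := by rw [hunits]; omega
    haveI : Fact (Nat.Prime 3) := ⟨Nat.prime_three⟩
    obtain ⟨ω, hω⟩ := exists_prime_orderOf_dvd_card 3 h31
    set w : F := (ω : F) with hw
    have hw3 : w ^ 3 = 1 := by
      have h' := pow_orderOf_eq_one ω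
      rw [hω] at h'
      rw [hw]
      have h2' := congrArg (Units.val) h'
      push_cast at h2'
      exact h2'
    have hw1 : w ≠ 1 := by
      intro h
      rw [hw] at h
      have : ω = 1 := Units.ext (by simpa using h)
      rw [this] at hω; simp at hω
    have hw2 : w * w ≠ 1 := by
      intro h
      rw [hw] at h
      have h1 : ω * ω = 1 := Units.ext (by push_cast; simpa using h)
      have h2' : ω ^ 2 = 1 := by rw [sq]; exact h1
      have := orderOf_dvd_of_pow_eq_one h2'
      rw [hω] at this
      omega
    have hwne : w ≠ 0 := ω.ne_zero
    set f : F → F × F := fun x => (((X : F[X]) ^ 3).eval x, Q.eval x) with hf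
    have hinj : Function.Injective f := (ncard_range_eq_iff f).mp hncard
    have hmemf : ∀ x : F, f x ∈ polyGraph ((X : F[X]) ^ 3) Q := fun x => ⟨x, rfl⟩
    have hfx : ∀ x : F, f x = (x ^ 3, Q.eval x) := by
      intro x; simp [hf]
    have hcube : ∀ x : F, (w * x) ^ 3 = x ^ 3 := by
      intro x; rw [mul_pow, hw3, one_mul]
    set d : F → F := fun x => Q.eval (w * x) - Q.eval x with hd
    have hd0 : ∀ x : F, x ≠ 0 → d x ≠ 0 := by
      intro x hx h0
      simp only [hd] at h0
      have hQ : Q.eval (w * x) = Q.eval x := sub_eq_zero.mp h0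
      have hfe : f (w * x) = f x := by
        rw [hfx, hfx, hcube, hQ]
      have heq := hinj hfe
      have : w * x = 1 * x := by rw [one_mul]; exact heq
      exact hw1 (mul_right_cancel₀ hx this)
    have keyGen : ∀ x u v : F, x ≠ 0 → u ^ 3 = v ^ 3 →
        d x = Q.eval u - Q.eval v → f x = f v ∧ f (w * x) = f u := by
      intro x u v hx huv hduv
      simp only [hd] at hduv
      have hsub : f (w * x) - f x = f u - f v := by
        simp only [hfx, Prod.mk_sub_mk, Prod.mk.injEq]
        exact ⟨by rw [hcube, huv]; ring, hduv⟩
      have hne : f (w * x) ≠ f x := by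
        intro h
        apply hd0 x hx
        have h' := congrArg Prod.snd h
        simp only [hfx] at h'
        simp only [hd]
        exact sub_eq_zero_of_eq h'
      have hr := sidon_eq hS (hmemf (w * x)) (hmemf x) (hmemf u) (hmemf v) hsub hne
      exact ⟨hr.2, hr.1⟩
    set s : Set F := {x : F | x ≠ 0} with hs
    have hmaps : ∀ x ∈ s, d x ∈ s := fun x hx => hd0 x hx
    have hinjOn : Set.InjOn d s := by
      intro x hx y hy hxy
      have := (keyGen x (w * y) y hx (hcube y) (by rw [hxy])).1
      exact hinj this
    have hsurj : d '' s = s := by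
      apply Set.eq_of_subset_of_ncard_le
      · rintro _ ⟨x, hx, rfl⟩; exact hmaps x hx
      · rw [Set.ncard_image_of_injOn hinjOn]
      · exact Set.toFinite s
    have hv : (Q.eval (w * (w * 1)) - Q.eval 1) ∈ s := by
      simp only [hs, Set.mem_setOf_eq]
      intro h0
      have hQ : Q.eval (w * (w * 1)) = Q.eval 1 := sub_eq_zero.mp h0
      have hfe : f (w * (w * 1)) = f 1 := by
        rw [hfx, hfx, hQ]
        congr 1
        rw [hcube, hcube]
      have := hinj hfe
      simp only [mul_one] at this
      exact hw2 this
    rw [← hsurj] at hv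
    obtain ⟨y, hy, hdy⟩ := hv
    have hkey := keyGen y (w * (w * 1)) 1 hy (by rw [hcube, hcube]) hdy
    have hy1 : y = 1 := hinj hkey.1
    have h2' := hinj hkey.2
    rw [hy1] at h2'
    have h3' : (1 : F) = w * 1 := mul_left_cancel₀ hwne h2'
    rw [mul_one] at h3'
    exact hw1 h3'.symm
  · intro h6
    have hq3 : q % 3 = 2 := by omega
    have hcube : Function.Injective (fun x : F => x ^ 3) := by
      intro x y hxy
      simp only at hxy
      rcases eq_or_ne y 0 with rfl | hy
      · rw [zero_pow (by norm_num)] at hxy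
        exact pow_eq_zero_iff (n := 3) (by norm_num) |>.mp hxy
      · rcases eq_or_ne x 0 with rfl | hx
        · rw [zero_pow (by norm_num)] at hxy
          exact (hy (pow_eq_zero_iff (n := 3) (by norm_num) |>.mp hxy.symm)).elim
        · set u : Fˣ := Units.mk0 x hx
          set v : Fˣ := Units.mk0 y hy
          have huv : u ^ 3 = v ^ 3 := Units.ext (by push_cast [u, v]; exact hxy)
          have hz : (u * v⁻¹) ^ 3 = 1 := by
            rw [mul_pow, inv_pow, huv]
            simp
          have hdvd1 : orderOf (u * v⁻¹) ∣ 3 := orderOf_dvd_of_pow_eq_one hz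
          have hdvd2 : orderOf (u * v⁻¹) ∣ q - 1 := hunits ▸ orderOf_dvd_card
          have hcop : Nat.gcd 3 (q - 1) = 1 := by
            have hnd3 : ¬ 3 ∣ q - 1 := by omega
            exact (Nat.prime_three.coprime_iff_not_dvd).mpr hnd3
          have hord1 : orderOf (u * v⁻¹) = 1 :=
            Nat.dvd_one.mp (hcop ▸ Nat.dvd_gcd hdvd1 hdvd2)
          have huv1 : u * v⁻¹ = 1 := orderOf_eq_one_iff.mp hord1
          have : u = v := by rwa [mul_inv_eq_one] at huv1
          exact congrArg Units.val this
    have h2F : (2 : F) ≠ 0 := by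
      intro h0
      have hd2 := (CharP.cast_eq_zero_iff F (ringChar F) 2).mp (by exact_mod_cast h0)
      have := Nat.le_of_dvd (by norm_num) hd2
      omega
    refine ⟨(X : F[X]) ^ 6, ?_, ?_⟩
    · rintro a₁ ⟨x₁, rfl⟩ a₂ ⟨x₂, rfl⟩ a₃ ⟨x₃, rfl⟩ a₄ ⟨x₄, rfl⟩ h
      simp only [Prod.mk_sub_mk, Prod.mk.injEq, eval_pow, eval_X] at h
      obtain ⟨h1, hsq⟩ := h
      have e6 : ∀ x : F, x ^ 6 = (x ^ 3) ^ 2 := fun x => by ring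
      rw [e6, e6, e6, e6] at hsq
      set t₁ := x₁ ^ 3
      set t₂ := x₂ ^ 3
      set t₃ := x₃ ^ 3
      set t₄ := x₄ ^ 3
      by_cases hc : t₁ = t₂
      · have h34 : t₃ = t₄ := by
          have : t₃ - t₄ = 0 := by rw [← h1, hc, sub_self]
          exact sub_eq_zero.mp this
        have hx12 : x₁ = x₂ := hcube hc
        have hx34 : x₃ = x₄ := hcube h34
        rw [hx12, hx34]
      · have hsum : t₁ + t₂ = t₃ + t₄ := by
          have hne : t₁ - t₂ ≠ 0 := sub_ne_zero.mpr hc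
          have hm : (t₁ - t₂) * (t₁ + t₂) = (t₁ - t₂) * (t₃ + t₄) := by
            linear_combination hsq - (t₃ + t₄) * h1
          exact mul_left_cancel₀ hne hm
        have ht13 : t₁ = t₃ := by
          have hm : 2 * t₁ = 2 * t₃ := by linear_combination h1 + hsum
          exact mul_left_cancel₀ h2F hm
        have ht24 : t₂ = t₄ := by linear_combination hsum - ht13
        have hx13 : x₁ = x₃ := hcube ht13
        have hx24 : x₂ = x₄ := hcube ht24
        rw [hx13, hx24]
        exact Set.pair_comm _ _
    · exact (ncard_range_eq_iff _).mpr fun x y hxy => hcube (by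
        have := congrArg Prod.fst hxy
        simpa using this)
end
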